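/- arXiv:2412.04693 — 10 statements merged into one kernel-verified Lean document; each statement's English description precedes it below -/
import Mathlib

section
/- Let 1 ≤ κ ≤ N and K > 0. There exists a maximizer c̃ ∈ D_N(K) of c ↦ 𝒱(c;κ,L) over D_N(K) satisfying (i) c̃_i L_i ≤ c̃_j L_j for every i ∈ {1,…,κ} and every j ∈ {κ+1,…,N}, and (ii) c̃_1 L_1 ≤ c̃_2 L_2 ≤ ⋯ ≤ c̃_κ L_κ; moreover for such a maximizer V(κ,K,L) = ∑_{i=1}^{κ} c̃_i L_i. -/
/-!
`Vmin` is a minimum of finitely many linear forms, hence continuous, so it attains its maximum on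
the compact set `D_N(K)`. A maximizer `c₀` can then be sorted: put the `k`-th smallest of the
products `c₀ i * L i` at position `k`. Since `L` is increasing the new products stay below `L k`
(pigeonhole), and since `1 / L` is decreasing the rearrangement inequality shows that the budget
`∑ c i = ∑ (c i * L i) / L i` does not grow; the multiset of products, hence `Vmin`, is unchanged.
Once the products on `[1, κ]` lie below those on `[κ + 1, N]`, the first `κ` indices realise the
minimum in `Vmin`, and `V(κ, K, L)` is the value of `Vmin` at any maximizer.
-/

open Finset

/-- The inner minimum `𝒱(c; κ, L)`: the minimum over subsets `U ⊆ {1,…,N}` with `|U| = κ`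
of `∑_{i ∈ U} c_i L_i`. -/
noncomputable def Vmin (N κ : ℕ) (L c : ℕ → ℝ) : ℝ :=
  sInf {x : ℝ | ∃ U : Finset ℕ, U ⊆ Finset.Icc 1 N ∧ U.card = κ ∧ x = ∑ i ∈ U, c i * L i}

/-- Membership in the constraint set `D_N(K) = {c ∈ [0,1]^N : ∑_{i=1}^N c_i ≤ K}`. -/
def Dmem (N : ℕ) (K : ℝ) (c : ℕ → ℝ) : Prop :=
  (∀ i ∈ Finset.Icc 1 N, 0 ≤ c i ∧ c i ≤ 1) ∧ (∑ i ∈ Finset.Icc 1 N, c i) ≤ K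

/-- The max–min value `V(κ, K, L) = sup_{c ∈ D_N(K)} 𝒱(c; κ, L)`. -/
noncomputable def Vval (N κ : ℕ) (K : ℝ) (L : ℕ → ℝ) : ℝ :=
  sSup {v : ℝ | ∃ c : ℕ → ℝ, Dmem N K c ∧ v = Vmin N κ L c}

theorem Finset.sum_le_sum_of_card_eq_of_forall_le {ι M : Type*} [DecidableEq ι]
    [AddCommMonoid M] [LinearOrder M] [IsOrderedAddMonoid M] {A U : Finset ι} {w : ι → M}
    (hcard : #A = #U) (hle : ∀ i ∈ A, ∀ j ∈ U \ A, w i ≤ w j) :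
    ∑ i ∈ A, w i ≤ ∑ i ∈ U, w i := by
  have hdiff : ∑ i ∈ A \ U, w i ≤ ∑ j ∈ U \ A, w j := by
    rcases (A \ U).eq_empty_or_nonempty with hAU | hAU
    · have hUA : U \ A = ∅ := card_eq_zero.1 (card_sdiff_comm hcard ▸ card_eq_zero.2 hAU)
      rw [hAU, hUA]
    · set m := (A \ U).sup' hAU w
      calc ∑ i ∈ A \ U, w i ≤ #(A \ U) • m := sum_le_card_nsmul _ _ _ fun i hi => le_sup' w hi
        _ = #(U \ A) • m := by rw [card_sdiff_comm hcard]
        _ ≤ ∑ j ∈ U \ A, w j := card_nsmul_le_sum _ _ _ fun j hj =>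
            sup'_le hAU w fun i hi => hle i (mem_sdiff.1 hi).1 j hj
  calc ∑ i ∈ A, w i = ∑ i ∈ A ∩ U, w i + ∑ i ∈ A \ U, w i := (sum_inter_add_sum_sdiff _ _ _).symm
    _ ≤ ∑ i ∈ U ∩ A, w i + ∑ i ∈ U \ A, w i := by rw [inter_comm]; exact add_le_add_right hdiff _
    _ = ∑ i ∈ U, w i := sum_inter_add_sum_sdiff _ _ _

theorem Tuple.comp_sort_le_of_le_of_monotone {α : Type*} [LinearOrder α] {n : ℕ}
    {a f : Fin n → α} (haf : a ≤ f) (hf : Monotone f) : a ∘ Tuple.sort a ≤ f := by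
  intro k
  set σ := Tuple.sort a
  -- pigeonhole: `σ` cannot map the `n - k` indices `≥ k` into the `n - k - 1` indices `> k`
  obtain ⟨j, hkj, hjk⟩ : ∃ j, k ≤ j ∧ σ j ≤ k := by
    by_contra! h
    have hsub : (Ici k).image σ ⊆ Ioi k := fun m hm => by
      obtain ⟨j, hj, rfl⟩ := mem_image.1 hm
      exact mem_Ioi.2 (h j (mem_Ici.1 hj))
    have := card_le_card hsub
    rw [card_image_of_injective _ σ.injective, Fin.card_Ici, Fin.card_Ioi] at this
    omega
  calc a (σ k) ≤ a (σ j) := Tuple.monotone_sort a hkj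
    _ ≤ f (σ j) := haf _
    _ ≤ f k := hf hjk

theorem Tuple.sum_comp_sort_mul_le_sum_mul {α : Type*} [CommSemiring α] [LinearOrder α]
    [IsStrictOrderedRing α] [ExistsAddOfLE α] {n : ℕ} (a : Fin n → α) {g : Fin n → α}
    (hg : Antitone g) : ∑ k, a (Tuple.sort a k) * g k ≤ ∑ k, a k * g k := by
  have := ((Tuple.monotone_sort a).antivary hg).sum_mul_le_sum_comp_perm_mul
    (σ := (Tuple.sort a)⁻¹)
  simpa using this

theorem sum_Icc_one_eq_sum_fin {M : Type*} [AddCommMonoid M] (N : ℕ) (f : ℕ → M) :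
    ∑ i ∈ Icc 1 N, f i = ∑ k : Fin N, f (k + 1) := by
  rw [Fin.sum_univ_eq_sum_range (fun k => f (k + 1)), range_eq_Ico, sum_Ico_add']
  rfl

section Vmin

variable {N κ : ℕ} {L : ℕ → ℝ}

theorem powersetCard_Icc_nonempty (hκN : κ ≤ N) : (powersetCard κ (Icc 1 N)).Nonempty :=
  powersetCard_nonempty.2 (by simpa using hκN)

theorem Vmin_eq_inf' (hκN : κ ≤ N) (c : ℕ → ℝ) :
    Vmin N κ L c = (powersetCard κ (Icc 1 N)).inf' (powersetCard_Icc_nonempty hκN)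
      fun U => ∑ i ∈ U, c i * L i := by
  rw [inf'_eq_csInf_image, Vmin]
  congr 1
  ext x
  simp only [Set.mem_ofPred_eq, Set.mem_image, mem_coe, mem_powersetCard, and_assoc, eq_comm]

theorem continuous_Vmin (hκN : κ ≤ N) : Continuous (Vmin N κ L) := by
  simp_rw [funext (Vmin_eq_inf' (L := L) hκN)]
  exact Continuous.finset_inf'_apply _ fun U _ =>
    continuous_finsetSum _ fun i _ => (continuous_apply i).mul continuous_const

theorem Vmin_le_Vmin_of_injOn (hκN : κ ≤ N) {c c' : ℕ → ℝ} {e : ℕ → ℕ}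
    (hmaps : Set.MapsTo e (Icc 1 N) (Icc 1 N)) (hinj : Set.InjOn e (Icc 1 N))
    (h : ∀ i ∈ Icc 1 N, c' i * L i = c (e i) * L (e i)) :
    Vmin N κ L c ≤ Vmin N κ L c' := by
  rw [Vmin_eq_inf' hκN, Vmin_eq_inf' hκN]
  refine le_inf' _ _ fun U hU => ?_
  obtain ⟨hUN, hUκ⟩ := mem_powersetCard.1 hU
  have hinjU : Set.InjOn e U := hinj.mono (coe_subset.2 hUN)
  have hmem : U.image e ∈ powersetCard κ (Icc 1 N) := mem_powersetCard.2
    ⟨image_subset_iff.2 fun i hi => hmaps (hUN hi), by rw [card_image_of_injOn hinjU, hUκ]⟩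
  calc _ ≤ ∑ i ∈ U.image e, c i * L i := inf'_le _ hmem
    _ = ∑ i ∈ U, c' i * L i := by
      rw [sum_image hinjU]
      exact sum_congr rfl fun i hi => (h i (hUN hi)).symm

theorem Vmin_congr (hκN : κ ≤ N) {c c' : ℕ → ℝ} (h : ∀ i ∈ Icc 1 N, c i = c' i) :
    Vmin N κ L c = Vmin N κ L c' :=
  le_antisymm
    (Vmin_le_Vmin_of_injOn hκN (Set.mapsTo_id _) (Set.injOn_id _) fun i hi => by rw [id, h i hi])
    (Vmin_le_Vmin_of_injOn hκN (Set.mapsTo_id _) (Set.injOn_id _) fun i hi => by rw [id, h i hi])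

theorem Vmin_eq_sum_Icc (hκN : κ ≤ N) {c : ℕ → ℝ}
    (hc : ∀ i ∈ Icc 1 κ, ∀ j ∈ Icc (κ + 1) N, c i * L i ≤ c j * L j) :
    Vmin N κ L c = ∑ i ∈ Icc 1 κ, c i * L i := by
  have hκ : Icc 1 κ ∈ powersetCard κ (Icc 1 N) :=
    mem_powersetCard.2 ⟨Icc_subset_Icc_right hκN, by simp⟩
  rw [Vmin_eq_inf' hκN]
  refine le_antisymm (inf'_le _ hκ) (le_inf' _ _ fun U hU => ?_)
  obtain ⟨hUN, hUκ⟩ := mem_powersetCard.1 hU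
  refine sum_le_sum_of_card_eq_of_forall_le (by simp [hUκ]) fun i hi j hj => hc i hi j ?_
  obtain ⟨hjU, hjκ⟩ := mem_sdiff.1 hj
  obtain ⟨hj1, hjN⟩ := mem_Icc.1 (hUN hjU)
  simp only [mem_Icc, not_and, not_le] at hjκ
  exact mem_Icc.2 ⟨hjκ hj1, hjN⟩

end Vmin

theorem exists_fin_add_one_eq_of_mem_Icc {N i : ℕ} (hi : i ∈ Icc 1 N) :
    ∃ k : Fin N, (k : ℕ) + 1 = i := by
  obtain ⟨h1, hN⟩ := mem_Icc.1 hi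
  exact ⟨⟨i - 1, by omega⟩, by simp only; omega⟩

theorem fin_add_one_mem_Icc {N : ℕ} (k : Fin N) : (k : ℕ) + 1 ∈ Icc 1 N :=
  mem_Icc.2 ⟨by omega, k.isLt⟩

section MaxMin

variable {N κ : ℕ} {K : ℝ} {L : ℕ → ℝ}

theorem exists_Dmem_forall_Vmin_le (hκN : κ ≤ N) (hK : 0 ≤ K) :
    ∃ c, Dmem N K c ∧ ∀ c', Dmem N K c' → Vmin N κ L c' ≤ Vmin N κ L c := by
  -- `D_N(K)` is not compact in `ℕ → ℝ`, but its points vanishing off `[1, N]` are, and they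
  -- already realise every value of `Vmin`.
  set T : Set (ℕ → ℝ) := (Set.univ.pi fun i => Set.Icc 0 (if i ∈ Icc 1 N then 1 else 0)) ∩
    {c | ∑ i ∈ Icc 1 N, c i ≤ K}
  have hT : IsCompact T := (isCompact_univ_pi fun _ => isCompact_Icc).inter_right
    (isClosed_le (continuous_finsetSum _ fun i _ => continuous_apply i) continuous_const)
  have hT0 : (0 : ℕ → ℝ) ∈ T :=
    ⟨fun i _ => ⟨le_rfl, by split_ifs <;> norm_num⟩, by simpa using hK⟩
  obtain ⟨c, hcT, hmax⟩ := hT.exists_isMaxOn ⟨0, hT0⟩ (continuous_Vmin (L := L) hκN).continuousOn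
  refine ⟨c, ⟨fun i hi => by simpa [hi] using hcT.1 i trivial, hcT.2⟩, fun c' hc' => ?_⟩
  set c'' : ℕ → ℝ := fun i => if i ∈ Icc 1 N then c' i else 0
  have hc'' : ∀ i ∈ Icc 1 N, c' i = c'' i := fun i hi => (if_pos hi).symm
  have hc''T : c'' ∈ T := by
    refine ⟨fun i _ => ?_, show ∑ i ∈ Icc 1 N, c'' i ≤ K by rw [← sum_congr rfl hc'']; exact hc'.2⟩
    by_cases hi : i ∈ Icc 1 N
    · simp only [c'', if_pos hi]; exact hc'.1 i hi
    · simp only [c'', if_neg hi]; exact ⟨le_rfl, le_rfl⟩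
  rw [Vmin_congr hκN hc'']
  exact hmax hc''T

theorem exists_Dmem_monotoneOn_Vmin_le (hκN : κ ≤ N) (hLpos : ∀ i ∈ Icc 1 N, 0 < L i)
    (hLmono : MonotoneOn L (Icc 1 N : Set ℕ)) {c₀ : ℕ → ℝ} (h₀ : Dmem N K c₀) :
    ∃ c, Dmem N K c ∧ Vmin N κ L c₀ ≤ Vmin N κ L c ∧
      MonotoneOn (fun i => c i * L i) (Icc 1 N : Set ℕ) := by
  set a : Fin N → ℝ := fun k => c₀ (k + 1) * L (k + 1)
  set σ := Tuple.sort a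
  -- the new vector puts the `k`-th smallest product `c₀ i * L i` at position `k`
  set e : ℕ → ℕ := fun i => if h : i - 1 < N then σ ⟨i - 1, h⟩ + 1 else i
  set c : ℕ → ℝ := fun i => c₀ (e i) * L (e i) / L i
  have he : ∀ k : Fin N, e (k + 1) = σ k + 1 := fun k => by simp [e]
  have hcL : ∀ i ∈ Icc 1 N, c i * L i = c₀ (e i) * L (e i) := fun i hi =>
    div_mul_cancel₀ _ (hLpos i hi).ne'
  have hcL' : ∀ k : Fin N, c (k + 1) * L (k + 1) = a (σ k) := fun k => by
    rw [hcL _ (fin_add_one_mem_Icc k), he]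
  have hLk : ∀ k : Fin N, 0 < L (k + 1) := fun k => hLpos _ (fin_add_one_mem_Icc k)
  have hf : Monotone fun k : Fin N => L (k + 1) := fun k k' hkk' =>
    hLmono (fin_add_one_mem_Icc k) (fin_add_one_mem_Icc k') (by simpa using hkk')
  have haf : a ≤ fun k : Fin N => L (k + 1) := fun k =>
    mul_le_of_le_one_left (hLk k).le (h₀.1 _ (fin_add_one_mem_Icc k)).2
  have hc : ∀ k : Fin N, c (k + 1) = a (σ k) / L (k + 1) := fun k =>
    eq_div_of_mul_eq (hLk k).ne' (hcL' k)
  have hD : Dmem N K c := by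
    refine ⟨fun i hi => ?_, ?_⟩
    · obtain ⟨k, rfl⟩ := exists_fin_add_one_eq_of_mem_Icc hi
      rw [hc, div_le_one (hLk k)]
      exact ⟨div_nonneg (mul_nonneg (h₀.1 _ (fin_add_one_mem_Icc _)).1 (hLk _).le) (hLk k).le,
        Tuple.comp_sort_le_of_le_of_monotone haf hf k⟩
    · calc ∑ i ∈ Icc 1 N, c i = ∑ k : Fin N, a (σ k) * (L (k + 1))⁻¹ := by
            rw [sum_Icc_one_eq_sum_fin]
            exact sum_congr rfl fun k _ => by rw [hc, div_eq_mul_inv]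
        _ ≤ ∑ k : Fin N, a k * (L (k + 1))⁻¹ :=
            Tuple.sum_comp_sort_mul_le_sum_mul a fun k k' hkk' => inv_anti₀ (hLk k) (hf hkk')
        _ = ∑ i ∈ Icc 1 N, c₀ i := by
            rw [sum_Icc_one_eq_sum_fin]
            exact sum_congr rfl fun k _ => mul_inv_cancel_right₀ (hLk k).ne' _
        _ ≤ K := h₀.2
  refine ⟨c, hD, Vmin_le_Vmin_of_injOn hκN (fun i hi => ?_) (fun i hi j hj hij => ?_) hcL,
    fun i hi j hj hij => ?_⟩
  · obtain ⟨k, rfl⟩ := exists_fin_add_one_eq_of_mem_Icc hi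
    rw [he]
    exact fin_add_one_mem_Icc _
  · obtain ⟨k, rfl⟩ := exists_fin_add_one_eq_of_mem_Icc hi
    obtain ⟨k', rfl⟩ := exists_fin_add_one_eq_of_mem_Icc hj
    rw [he, he] at hij
    rw [σ.injective (Fin.ext (Nat.succ_injective hij))]
  · obtain ⟨k, rfl⟩ := exists_fin_add_one_eq_of_mem_Icc hi
    obtain ⟨k', rfl⟩ := exists_fin_add_one_eq_of_mem_Icc hj
    simp only [hcL']
    exact Tuple.monotone_sort a (Fin.le_iff_val_le_val.2 (by omega))

theorem Vval_eq_Vmin {c : ℕ → ℝ} (hc : Dmem N K c)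
    (hmax : ∀ c', Dmem N K c' → Vmin N κ L c' ≤ Vmin N κ L c) :
    Vval N κ K L = Vmin N κ L c :=
  IsGreatest.csSup_eq ⟨⟨c, hc, rfl⟩, by rintro _ ⟨c', hc', rfl⟩; exact hmax c' hc'⟩

end MaxMin

theorem stmt_1_general (N : ℕ) (L : ℕ → ℝ)
    (hLpos : ∀ i ∈ Finset.Icc 1 N, 0 < L i)
    (hLmono : ∀ i j : ℕ, 1 ≤ i → i ≤ j → j ≤ N → L i ≤ L j)
    (κ : ℕ) (hκN : κ ≤ N) (K : ℝ) (hK : 0 < K) :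
    (∃ c : ℕ → ℝ, Dmem N K c ∧
      (∀ c' : ℕ → ℝ, Dmem N K c' → Vmin N κ L c' ≤ Vmin N κ L c) ∧
      (∀ i ∈ Finset.Icc 1 κ, ∀ j ∈ Finset.Icc (κ + 1) N, c i * L i ≤ c j * L j) ∧
      (∀ i j : ℕ, 1 ≤ i → i ≤ j → j ≤ κ → c i * L i ≤ c j * L j)) ∧
    (∀ c : ℕ → ℝ, Dmem N K c →
      (∀ c' : ℕ → ℝ, Dmem N K c' → Vmin N κ L c' ≤ Vmin N κ L c) →
      (∀ i ∈ Finset.Icc 1 κ, ∀ j ∈ Finset.Icc (κ + 1) N, c i * L i ≤ c j * L j) →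
      (∀ i j : ℕ, 1 ≤ i → i ≤ j → j ≤ κ → c i * L i ≤ c j * L j) →
      Vval N κ K L = ∑ i ∈ Finset.Icc 1 κ, c i * L i) := by
  refine ⟨?_, fun c hc hmax hsep _ => by rw [Vval_eq_Vmin hc hmax, Vmin_eq_sum_Icc hκN hsep]⟩
  have hLmono' : MonotoneOn L (Icc 1 N : Set ℕ) := fun i hi j hj hij =>
    hLmono i j (mem_Icc.1 hi).1 hij (mem_Icc.1 hj).2
  obtain ⟨c₀, hc₀, hmax₀⟩ := exists_Dmem_forall_Vmin_le (L := L) hκN hK.le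
  obtain ⟨c, hc, hc₀c, hmono⟩ := exists_Dmem_monotoneOn_Vmin_le hκN hLpos hLmono' hc₀
  refine ⟨c, hc, fun c' hc' => (hmax₀ c' hc').trans hc₀c, fun i hi j hj => ?_,
    fun i j hi hij hj => ?_⟩
  · obtain ⟨hi1, hiκ⟩ := mem_Icc.1 hi
    obtain ⟨hjκ, hjN⟩ := mem_Icc.1 hj
    exact hmono (mem_Icc.2 ⟨hi1, by omega⟩) (mem_Icc.2 ⟨by omega, hjN⟩) (by omega)
  · exact hmono (mem_Icc.2 ⟨hi, by omega⟩) (mem_Icc.2 ⟨by omega, by omega⟩) hij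

/-- there is a maximizer `c̃ ∈ D_N(K)` of `c ↦ 𝒱(c;κ,L)` satisfying
(i) `c̃_i L_i ≤ c̃_j L_j` for `i ∈ {1,…,κ}`, `j ∈ {κ+1,…,N}`, and
(ii) `c̃_1 L_1 ≤ ⋯ ≤ c̃_κ L_κ`; moreover for any such maximizer
`V(κ,K,L) = ∑_{i=1}^κ c̃_i L_i`. -/
theorem stmt_1 (N : ℕ) (hN : 1 ≤ N) (L : ℕ → ℝ)
    (hLpos : ∀ i ∈ Finset.Icc 1 N, 0 < L i)
    (hLmono : ∀ i j : ℕ, 1 ≤ i → i ≤ j → j ≤ N → L i ≤ L j)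
    (κ : ℕ) (hκ1 : 1 ≤ κ) (hκN : κ ≤ N) (K : ℝ) (hK : 0 < K) :
    (∃ c : ℕ → ℝ, Dmem N K c ∧
      (∀ c' : ℕ → ℝ, Dmem N K c' → Vmin N κ L c' ≤ Vmin N κ L c) ∧
      (∀ i ∈ Finset.Icc 1 κ, ∀ j ∈ Finset.Icc (κ + 1) N, c i * L i ≤ c j * L j) ∧
      (∀ i j : ℕ, 1 ≤ i → i ≤ j → j ≤ κ → c i * L i ≤ c j * L j)) ∧
    (∀ c : ℕ → ℝ, Dmem N K c →
      (∀ c' : ℕ → ℝ, Dmem N K c' → Vmin N κ L c' ≤ Vmin N κ L c) →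
      (∀ i ∈ Finset.Icc 1 κ, ∀ j ∈ Finset.Icc (κ + 1) N, c i * L i ≤ c j * L j) →
      (∀ i j : ℕ, 1 ≤ i → i ≤ j → j ≤ κ → c i * L i ≤ c j * L j) →
      Vval N κ K L = ∑ i ∈ Finset.Icc 1 κ, c i * L i) :=
  stmt_1_general N L hLpos hLmono κ hκN K hK
end

section
/- Let 1 ≤ κ ≤ N. If K ≥ κ + L_κ · ∑_{j=κ+1}^{N} 1/L_j, then V(κ,K,L) = ∑_{i=1}^{κ} L_i, and the vector c′ defined by c′_i = 1 for 1 ≤ i ≤ κ and c′_j = L_κ / L_j for κ+1 ≤ j ≤ N belongs to D_N(K) and satisfies 𝒱(c′;κ,L) = ∑_{i=1}^{κ} L_i. -/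
open Finset

-- key lemma
lemma key_lb (N : ℕ) (L : ℕ → ℝ)
    (hLpos : ∀ i ∈ Finset.Icc 1 N, 0 < L i)
    (hLmono : ∀ i j : ℕ, 1 ≤ i → i ≤ j → j ≤ N → L i ≤ L j)
    (κ : ℕ) (hκ1 : 1 ≤ κ) (hκN : κ ≤ N)
    (U : Finset ℕ) (hU : U ⊆ Finset.Icc 1 N) (hcard : U.card = κ) :
    ∑ i ∈ Finset.Icc 1 κ, L i ≤
      ∑ j ∈ U, (if j ≤ κ then (1:ℝ) else L κ / L j) * L j := by
  set f : ℕ → ℝ := fun j => (if j ≤ κ then (1:ℝ) else L κ / L j) * L j with hf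
  have hκmem : κ ∈ Finset.Icc 1 N := mem_Icc.mpr ⟨hκ1, hκN⟩
  have hfle : ∀ i ∈ Finset.Icc 1 κ, f i = L i := by
    intro i hi
    simp [hf, (mem_Icc.mp hi).2]
  have hfgt : ∀ j ∈ U \ Finset.Icc 1 κ, f j = L κ := by
    intro j hj
    obtain ⟨hjU, hjT⟩ := mem_sdiff.mp hj
    have hjN := mem_Icc.mp (hU hjU)
    have : ¬ j ≤ κ := by
      intro h; exact hjT (mem_Icc.mpr ⟨hjN.1, h⟩)
    simp only [hf, if_neg this]
    exact div_mul_cancel₀ _ (hLpos j (hU hjU)).ne'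
  set T := Finset.Icc 1 κ with hT
  have hcardT : T.card = κ := by simp [hT]
  have hcardeq : (T \ U).card = (U \ T).card := by
    have h1 := Finset.card_sdiff_add_card_inter T U
    have h2 := Finset.card_sdiff_add_card_inter U T
    rw [Finset.inter_comm] at h2
    omega
  have hsum1 : ∑ i ∈ T, L i = ∑ i ∈ T ∩ U, f i + ∑ i ∈ T \ U, f i := by
    rw [Finset.sum_inter_add_sum_sdiff T U f]
    exact (Finset.sum_congr rfl hfle).symm
  have hsum2 : ∑ j ∈ U, f j = ∑ i ∈ T ∩ U, f i + ∑ j ∈ U \ T, f j := by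
    rw [Finset.inter_comm]
    exact (Finset.sum_inter_add_sum_sdiff U T f).symm
  rw [hsum1, hsum2]
  have hstep : ∑ i ∈ T \ U, f i ≤ ∑ j ∈ U \ T, f j := by
    have h1 : ∑ i ∈ T \ U, f i ≤ (T \ U).card • L κ := by
      apply Finset.sum_le_card_nsmul
      intro i hi
      have hiT := (mem_sdiff.mp hi).1
      have hi' := mem_Icc.mp hiT
      rw [hfle i hiT]
      exact hLmono i κ hi'.1 hi'.2 hκN
    have h2 : ∑ j ∈ U \ T, f j = (U \ T).card • L κ := by
      rw [Finset.sum_congr rfl hfgt, Finset.sum_const]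
    rw [h2, ← hcardeq]
    exact h1
  linarith

/-- if `K ≥ κ + L_κ ∑_{j=κ+1}^N 1/L_j`, then `V(κ,K,L) = ∑_{i=1}^κ L_i`, and the
vector `c'` with `c'_i = 1` for `i ≤ κ` and `c'_j = L_κ / L_j` for `κ < j ≤ N` lies in `D_N(K)`
and satisfies `𝒱(c';κ,L) = ∑_{i=1}^κ L_i`. -/
theorem stmt_2 (N : ℕ) (hN : 1 ≤ N) (L : ℕ → ℝ)
    (hLpos : ∀ i ∈ Finset.Icc 1 N, 0 < L i)
    (hLmono : ∀ i j : ℕ, 1 ≤ i → i ≤ j → j ≤ N → L i ≤ L j)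
    (κ : ℕ) (hκ1 : 1 ≤ κ) (hκN : κ ≤ N) (K : ℝ)
    (hK : (κ : ℝ) + L κ * ∑ j ∈ Finset.Icc (κ + 1) N, (L j)⁻¹ ≤ K) :
    Vval N κ K L = ∑ i ∈ Finset.Icc 1 κ, L i ∧
    Dmem N K (fun j => if j ≤ κ then 1 else L κ / L j) ∧
    Vmin N κ L (fun j => if j ≤ κ then 1 else L κ / L j) = ∑ i ∈ Finset.Icc 1 κ, L i := by
  set c' : ℕ → ℝ := fun j => if j ≤ κ then 1 else L κ / L j with hc'
  set M : ℝ := ∑ i ∈ Finset.Icc 1 κ, L i with hM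
  have hsub : Finset.Icc 1 κ ⊆ Finset.Icc 1 N := Finset.Icc_subset_Icc_right hκN
  have hcardκ : (Finset.Icc 1 κ).card = κ := by simp
  -- M is in the Vmin set for c'
  have hMmem : M ∈ {x : ℝ | ∃ U : Finset ℕ, U ⊆ Finset.Icc 1 N ∧ U.card = κ ∧
      x = ∑ i ∈ U, c' i * L i} := by
    refine ⟨Finset.Icc 1 κ, hsub, hcardκ, ?_⟩
    apply Finset.sum_congr rfl
    intro i hi
    simp [hc', (Finset.mem_Icc.mp hi).2]
  -- lower bound for c'
  have hlow : ∀ x ∈ {x : ℝ | ∃ U : Finset ℕ, U ⊆ Finset.Icc 1 N ∧ U.card = κ ∧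
      x = ∑ i ∈ U, c' i * L i}, M ≤ x := by
    rintro x ⟨U, hU, hcard, rfl⟩
    exact key_lb N L hLpos hLmono κ hκ1 hκN U hU hcard
  -- Vmin c' = M
  have hVmin : Vmin N κ L c' = M :=
    le_antisymm (csInf_le ⟨M, hlow⟩ hMmem) (le_csInf ⟨M, hMmem⟩ hlow)
  -- Dmem
  have hDmem : Dmem N K c' := by
    constructor
    · intro i hi
      by_cases h : i ≤ κ
      · simp [hc', h]
      · have hLi := hLpos i hi
        have hκi : L κ ≤ L i := hLmono κ i hκ1 (le_of_not_ge h) (Finset.mem_Icc.mp hi).2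
        have hLκ : 0 < L κ := hLpos κ (Finset.mem_Icc.mpr ⟨hκ1, hκN⟩)
        refine ⟨?_, ?_⟩ <;> simp only [hc', if_neg h]
        · positivity
        · rw [div_le_one hLi]; exact hκi
    · have hsplit : Finset.Icc 1 N = Finset.Icc 1 κ ∪ Finset.Icc (κ+1) N := by
        rw [Finset.Icc_add_one_left_eq_Ioc κ N, show (1:ℕ) = 0 + 1 from rfl, Finset.Icc_add_one_left_eq_Ioc,
          Finset.Icc_add_one_left_eq_Ioc]
        exact (Finset.Ioc_union_Ioc_eq_Ioc (Nat.zero_le κ) hκN).symm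
      have hdisj : Disjoint (Finset.Icc 1 κ) (Finset.Icc (κ+1) N) := by
        rw [Finset.disjoint_left]
        intro a ha hb
        have := Finset.mem_Icc.mp ha
        have := Finset.mem_Icc.mp hb
        omega
      rw [hsplit, Finset.sum_union hdisj]
      have h1 : ∑ i ∈ Finset.Icc 1 κ, c' i = (κ : ℝ) := by
        have hone : ∀ i ∈ Finset.Icc 1 κ, c' i = 1 := by
          intro i hi; simp [hc', (Finset.mem_Icc.mp hi).2]
        rw [Finset.sum_congr rfl hone]
        simp
      have h2 : ∑ j ∈ Finset.Icc (κ+1) N, c' j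
          = L κ * ∑ j ∈ Finset.Icc (κ+1) N, (L j)⁻¹ := by
        rw [Finset.mul_sum]
        apply Finset.sum_congr rfl
        intro j hj
        have hj' := Finset.mem_Icc.mp hj
        have : ¬ j ≤ κ := by omega
        simp [hc', this, div_eq_mul_inv]
      rw [h1, h2]
      exact hK
  refine ⟨?_, hDmem, hVmin⟩
  -- Vval = M
  have hub : ∀ v ∈ {v : ℝ | ∃ c : ℕ → ℝ, Dmem N K c ∧ v = Vmin N κ L c}, v ≤ M := by
    rintro v ⟨c, hc, rfl⟩
    have hmem : (∑ i ∈ Finset.Icc 1 κ, c i * L i) ∈ {x : ℝ | ∃ U : Finset ℕ,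
        U ⊆ Finset.Icc 1 N ∧ U.card = κ ∧ x = ∑ i ∈ U, c i * L i} :=
      ⟨Finset.Icc 1 κ, hsub, hcardκ, rfl⟩
    have hbdd : BddBelow {x : ℝ | ∃ U : Finset ℕ, U ⊆ Finset.Icc 1 N ∧ U.card = κ ∧
        x = ∑ i ∈ U, c i * L i} := by
      refine ⟨0, ?_⟩
      rintro x ⟨U, hU, hcard, rfl⟩
      apply Finset.sum_nonneg
      intro i hi
      exact mul_nonneg (hc.1 i (hU hi)).1 (hLpos i (hU hi)).le
    calc Vmin N κ L c ≤ ∑ i ∈ Finset.Icc 1 κ, c i * L i := csInf_le hbdd hmem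
      _ ≤ M := by
          apply Finset.sum_le_sum
          intro i hi
          have h1 := hc.1 i (hsub hi)
          have h2 := hLpos i (hsub hi)
          nlinarith [h2.le]
  exact le_antisymm (csSup_le ⟨M, ⟨c', hDmem, hVmin.symm⟩⟩ hub)
    (le_csSup ⟨M, hub⟩ ⟨c', hDmem, hVmin.symm⟩)
end

section
/- Let 1 ≤ κ ≤ N and define u* := max{ u ∈ {0,1,…,κ−1} : ((κ − u)/(N − u)) · L̃_{u+1} ≥ L_u } (the set is nonempty since L_0 = 0). If 0 < K < L_{u*+1} · ∑_{i=u*+1}^{N} 1/L_i, then V(κ,K,L) = (κ − u*) · (K/(N − u*)) · L̃_{u*+1}, and there is a maximizer c̃ with c̃_i = 0 for all i ∈ {1,…,u*}. -/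
open Finset

/-- The harmonic-mean quantity `L̃_i := (N − i + 1) / (∑_{u=i}^N 1/L_u)`. -/
noncomputable def Lharm (N : ℕ) (L : ℕ → ℝ) (i : ℕ) : ℝ :=
  ((N : ℝ) - (i : ℝ) + 1) / ∑ u ∈ Finset.Icc i N, (L u)⁻¹

/-!
Write `S = ∑_{i>u} 1/L_i`, so that `L̃_{u+1} = (N - u)/S` and the claimed value is `(κ - u) K/S`.
The vector `c̃_i = K/(S L_i)` for `i > u` (feasible since `K < L_{u+1} S`) makes every `c̃_i L_i`
with `i > u` equal to `K/S`, and a `κ`-subset of `{1,…,N}` has at least `κ - u` elements above `u`,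
so `𝒱(c̃) = (κ - u) K/S`. Conversely, the minimum over `κ`-subsets is at most any weighted sum with
weights in `[0,1]` summing to `κ`. With weight `1` on `{1,…,u}` and `(κ - u)/(S L_i)` above `u`,
each `c_i` is charged at most `(κ - u)/S`, giving `𝒱(c) ≤ (κ - u) K/S`: on `{1,…,u}` this is
`L_i ≤ L_u ≤ (κ - u)/S`, the defining inequality of `u`, and the weights above `u` stay below `1`
because `u + 1` fails that inequality.
-/

noncomputable def tailInvSum (N : ℕ) (L : ℕ → ℝ) (u : ℕ) : ℝ :=
  ∑ i ∈ Icc (u + 1) N, (L i)⁻¹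

noncomputable def tailEqualizer (N : ℕ) (L : ℕ → ℝ) (u : ℕ) (K : ℝ) (i : ℕ) : ℝ :=
  if u < i then K / (tailInvSum N L u * L i) else 0

theorem filter_lt_Icc_one (u n : ℕ) : {i ∈ Icc 1 n | u < i} = Icc (u + 1) n := by
  ext; simp only [mem_filter, mem_Icc]; omega

theorem filter_not_lt_Icc_one {u n : ℕ} (h : u ≤ n) : {i ∈ Icc 1 n | ¬u < i} = Icc 1 u := by
  ext; simp only [mem_filter, mem_Icc]; omega

theorem exists_card_eq_sum_le_sum_mul {ι : Type*} [DecidableEq ι] (y : ι → ℝ) {k : ℕ}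
    {s : Finset ι} {p : ι → ℝ} (hp0 : ∀ i ∈ s, 0 ≤ p i) (hp1 : ∀ i ∈ s, p i ≤ 1)
    (hsum : ∑ i ∈ s, p i = k) : ∃ T ⊆ s, T.card = k ∧ ∑ i ∈ T, y i ≤ ∑ i ∈ s, p i * y i := by
  induction k generalizing s p with
  | zero =>
    have hp : ∀ i ∈ s, p i = 0 := (sum_eq_zero_iff_of_nonneg hp0).mp (by exact_mod_cast hsum)
    refine ⟨∅, empty_subset s, card_empty, ?_⟩
    rw [sum_empty, sum_eq_zero fun i hi => by rw [hp i hi, zero_mul]]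
  | succ k ih =>
    have hs : s.Nonempty := nonempty_of_sum_ne_zero (by rw [hsum]; positivity)
    obtain ⟨a, ha, hamin⟩ := s.exists_min_image y hs
    set d := ∑ i ∈ s.erase a, p i
    set E := ∑ i ∈ s.erase a, p i * y i
    have hd : d = k + 1 - p a := by
      have := add_sum_erase s p ha
      push_cast at hsum
      linarith
    have hkd : (k : ℝ) ≤ d := by linarith [hp1 a ha]
    have hdE : d * y a ≤ E := by
      rw [sum_mul]
      exact sum_le_sum fun i hi =>
        mul_le_mul_of_nonneg_left (hamin i (mem_of_mem_erase hi)) (hp0 i (mem_of_mem_erase hi))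
    set t := (k : ℝ) / d
    have hd0 : 0 ≤ d := k.cast_nonneg.trans hkd
    have ht0 : 0 ≤ t := div_nonneg k.cast_nonneg hd0
    have ht1 : t ≤ 1 := div_le_one_of_le₀ hkd hd0
    have htd : t * d = k := div_mul_cancel_of_imp fun h => by linarith [k.cast_nonneg (α := ℝ)]
    obtain ⟨T, hTs, hTcard, hTy⟩ := ih (s := s.erase a) (p := fun i => t * p i)
      (fun i hi => mul_nonneg ht0 (hp0 i (mem_of_mem_erase hi)))
      (fun i hi => mul_le_one₀ ht1 (hp0 i (mem_of_mem_erase hi)) (hp1 i (mem_of_mem_erase hi)))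
      (by rw [← mul_sum, htd])
    have haT : a ∉ T := fun h => (mem_erase.mp (hTs h)).1 rfl
    refine ⟨insert a T, insert_subset ha (hTs.trans (erase_subset a s)),
      by rw [card_insert_of_notMem haT, hTcard], ?_⟩
    have hTE : ∑ i ∈ T, y i ≤ t * E := hTy.trans_eq (by simp only [E, mul_sum, mul_assoc])
    have htdy : t * d * y a = k * y a := by rw [htd]
    have hdy : d * y a = (k + 1 - p a) * y a := by rw [hd]
    calc ∑ i ∈ insert a T, y i = y a + ∑ i ∈ T, y i := sum_insert haT
      _ ≤ p a * y a + E := by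
        -- the gap is `(1 - t) (E - d y a)`
        linarith [mul_nonneg (sub_nonneg.mpr ht1) (sub_nonneg.mpr hdE)]
      _ = ∑ i ∈ s, p i * y i := add_sum_erase s (fun i => p i * y i) ha

theorem Vmin_le {N κ : ℕ} {L c : ℕ → ℝ} {U : Finset ℕ} (hU : U ⊆ Icc 1 N) (hcard : U.card = κ) :
    Vmin N κ L c ≤ ∑ i ∈ U, c i * L i := by
  refine csInf_le ?_ ⟨U, hU, hcard, rfl⟩
  refine ((((Icc 1 N).powerset).image fun U => ∑ i ∈ U, c i * L i).finite_toSet.subset ?_).bddBelow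
  rintro x ⟨U, hU, -, rfl⟩
  simp only [coe_image, Set.mem_image, mem_coe, mem_powerset]
  exact ⟨U, hU, rfl⟩

theorem le_Vmin {N κ : ℕ} {L c : ℕ → ℝ} {v : ℝ} (hκN : κ ≤ N)
    (h : ∀ U ⊆ Icc 1 N, U.card = κ → v ≤ ∑ i ∈ U, c i * L i) : v ≤ Vmin N κ L c := by
  obtain ⟨U, hU, hcard⟩ := exists_subset_card_eq (s := Icc 1 N) (n := κ) (by simpa using hκN)
  refine le_csInf ⟨_, U, hU, hcard, rfl⟩ ?_
  rintro x ⟨U, hU, hc, rfl⟩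
  exact h U hU hc

theorem Vmin_le_sum_mul {N κ : ℕ} {L c p : ℕ → ℝ} (hp0 : ∀ i ∈ Icc 1 N, 0 ≤ p i)
    (hp1 : ∀ i ∈ Icc 1 N, p i ≤ 1) (hpsum : ∑ i ∈ Icc 1 N, p i = κ) :
    Vmin N κ L c ≤ ∑ i ∈ Icc 1 N, p i * (c i * L i) := by
  obtain ⟨T, hT, hcard, hle⟩ :=
    exists_card_eq_sum_le_sum_mul (fun i => c i * L i) hp0 hp1 hpsum
  exact (Vmin_le hT hcard).trans hle

theorem Vmin_eq_of_mul_eq {N κ u : ℕ} {L c : ℕ → ℝ} {a : ℝ} (ha : 0 ≤ a) (huκ : u ≤ κ)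
    (hκN : κ ≤ N) (hc : ∀ i ∈ Icc 1 N, c i * L i = if u < i then a else 0) :
    Vmin N κ L c = (κ - u) * a := by
  have hsum : ∀ U ⊆ Icc 1 N, ∑ i ∈ U, c i * L i = #{i ∈ U | u < i} * a := fun U hU => by
    rw [sum_congr rfl fun i hi => hc i (hU hi), ← sum_filter, sum_const, nsmul_eq_mul]
  apply le_antisymm
  · have hcard : #{i ∈ Icc 1 κ | u < i} = κ - u := by
      rw [filter_lt_Icc_one, Nat.card_Icc, Nat.add_sub_add_right]
    refine (Vmin_le (Icc_subset_Icc_right hκN) (Nat.card_Icc 1 κ)).trans_eq ?_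
    rw [hsum _ (Icc_subset_Icc_right hκN), hcard, Nat.cast_sub huκ]
  · refine le_Vmin hκN fun U hU hcard => ?_
    have hlow := card_le_card (filter_subset_filter (fun i => ¬u < i) hU)
    rw [filter_not_lt_Icc_one (huκ.trans hκN), Nat.card_Icc, Nat.add_sub_cancel] at hlow
    have hsplit := card_filter_add_card_filter_not (s := U) (fun i => u < i)
    have hhigh : (κ : ℝ) - u ≤ #{i ∈ U | u < i} := by
      rw [sub_le_iff_le_add]
      exact_mod_cast (by omega : κ ≤ #{i ∈ U | u < i} + u)
    rw [hsum U hU]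
    gcongr

section

variable {N : ℕ} {L : ℕ → ℝ}

theorem tailInvSum_pos (hLpos : ∀ i ∈ Icc 1 N, 0 < L i) {u : ℕ} (hu : u < N) :
    0 < tailInvSum N L u :=
  sum_pos (fun i hi => inv_pos.mpr (hLpos i (by simp only [mem_Icc] at hi ⊢; omega)))
    (nonempty_Icc.mpr hu)

theorem tailInvSum_eq_inv_add {u : ℕ} (hu : u < N) :
    tailInvSum N L u = (L (u + 1))⁻¹ + tailInvSum N L (u + 1) := by
  rw [tailInvSum, ← add_sum_erase _ _ (left_mem_Icc.mpr hu), Icc_erase_left,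
    ← Icc_add_one_left_eq_Ioc, tailInvSum]

theorem Lharm_succ (u : ℕ) : Lharm N L (u + 1) = (N - u) / tailInvSum N L u := by
  rw [Lharm, tailInvSum]
  push_cast
  ring_nf

theorem div_mul_Lharm_succ {κ u : ℕ} (hu : u < N) :
    ((κ : ℝ) - u) / (N - u) * Lharm N L (u + 1) = (κ - u) / tailInvSum N L u := by
  have : (N : ℝ) - u ≠ 0 := sub_ne_zero.mpr (by exact_mod_cast hu.ne')
  rw [Lharm_succ]
  field_simp

theorem sub_le_mul_tailInvSum (hLpos : ∀ i ∈ Icc 1 N, 0 < L i) {κ u : ℕ} (huκ : u < κ)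
    (hκN : κ ≤ N)
    (hnext : u + 1 < κ → ((κ : ℝ) - (u + 1 : ℕ)) / tailInvSum N L (u + 1) < L (u + 1)) :
    (κ : ℝ) - u ≤ L (u + 1) * tailInvSum N L u := by
  have hL : 0 < L (u + 1) := hLpos _ (by simp only [mem_Icc]; omega)
  have hrest : (κ : ℝ) - (u + 1 : ℕ) ≤ L (u + 1) * tailInvSum N L (u + 1) := by
    rcases (Nat.succ_le_of_lt huκ).eq_or_lt with h | h
    · rw [← h, sub_self]
      exact mul_nonneg hL.le
        (sum_nonneg fun i hi => (inv_pos.mpr (hLpos i (by simp only [mem_Icc] at hi ⊢; omega))).le)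
    · exact ((div_lt_iff₀ (tailInvSum_pos hLpos (by omega))).mp (hnext h)).le
  rw [tailInvSum_eq_inv_add (by omega), mul_add, mul_inv_cancel₀ hL.ne']
  push_cast at hrest
  linarith

theorem tailEqualizer_mul (hLpos : ∀ i ∈ Icc 1 N, 0 < L i) {u : ℕ} (K : ℝ) {i : ℕ}
    (hi : i ∈ Icc 1 N) :
    tailEqualizer N L u K i * L i = if u < i then K / tailInvSum N L u else 0 := by
  have := (hLpos i hi).ne'
  unfold tailEqualizer
  split_ifs
  · field_simp
  · exact zero_mul _

theorem Dmem_tailEqualizer (hLpos : ∀ i ∈ Icc 1 N, 0 < L i)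
    (hLmono : ∀ i j : ℕ, 1 ≤ i → i ≤ j → j ≤ N → L i ≤ L j) {u : ℕ} (hu : u < N) {K : ℝ}
    (hK0 : 0 ≤ K) (hK : K ≤ L (u + 1) * tailInvSum N L u) :
    Dmem N K (tailEqualizer N L u K) := by
  have hS := tailInvSum_pos hLpos hu
  refine ⟨fun i hi => ?_, le_of_eq ?_⟩
  · have hLi := hLpos i hi
    unfold tailEqualizer
    split_ifs with hui
    · refine ⟨by positivity, (div_le_one (by positivity)).mpr ?_⟩
      have := hLmono (u + 1) i (by omega) hui (mem_Icc.mp hi).2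
      nlinarith
    · exact ⟨le_rfl, zero_le_one⟩
  · simp only [tailEqualizer]
    rw [← sum_filter, filter_lt_Icc_one]
    calc ∑ i ∈ Icc (u + 1) N, K / (tailInvSum N L u * L i)
        = K / tailInvSum N L u * tailInvSum N L u := by
          rw [tailInvSum, mul_sum]
          exact sum_congr rfl fun i _ => by ring
      _ = K := div_mul_cancel₀ K hS.ne'

theorem Vmin_tailEqualizer (hLpos : ∀ i ∈ Icc 1 N, 0 < L i) {κ u : ℕ} (huκ : u < κ)
    (hκN : κ ≤ N) {K : ℝ} (hK0 : 0 ≤ K) :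
    Vmin N κ L (tailEqualizer N L u K) = (κ - u) * (K / tailInvSum N L u) :=
  Vmin_eq_of_mul_eq (div_nonneg hK0 (tailInvSum_pos hLpos (huκ.trans_le hκN)).le) huκ.le hκN
    fun _ hi => tailEqualizer_mul hLpos K hi

theorem Vmin_le_of_Dmem (hLpos : ∀ i ∈ Icc 1 N, 0 < L i)
    (hLmono : ∀ i j : ℕ, 1 ≤ i → i ≤ j → j ≤ N → L i ≤ L j) {κ u : ℕ} (huκ : u < κ)
    (hκN : κ ≤ N) (hLu : L u ≤ (κ - u) / tailInvSum N L u)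
    (hcap : (κ : ℝ) - u ≤ L (u + 1) * tailInvSum N L u) {K : ℝ} {c : ℕ → ℝ} (hc : Dmem N K c) :
    Vmin N κ L c ≤ (κ - u) * (K / tailInvSum N L u) := by
  have hS := tailInvSum_pos hLpos (huκ.trans_le hκN)
  set lam := ((κ : ℝ) - u) / tailInvSum N L u
  have hlam : 0 ≤ lam := div_nonneg (sub_nonneg.mpr (by exact_mod_cast huκ.le)) hS.le
  set p : ℕ → ℝ := fun i => if u < i then lam / L i else 1
  have hp : ∀ i ∈ Icc 1 N, 0 ≤ p i ∧ p i ≤ 1 := fun i hi => by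
    have hLi := hLpos i hi
    simp only [p]
    split_ifs with hui
    · refine ⟨by positivity, (div_le_one hLi).mpr ?_⟩
      have := hLmono (u + 1) i (by omega) hui (mem_Icc.mp hi).2
      exact ((div_le_iff₀ hS).mpr hcap).trans this
    · exact ⟨zero_le_one, le_rfl⟩
  have hpsum : ∑ i ∈ Icc 1 N, p i = κ := by
    have htail : ∑ i ∈ Icc (u + 1) N, lam / L i = lam * tailInvSum N L u := by
      simp only [tailInvSum, mul_sum, div_eq_mul_inv]
    rw [sum_ite, filter_lt_Icc_one, filter_not_lt_Icc_one (huκ.le.trans hκN), htail,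
      div_mul_cancel₀ _ hS.ne', sum_const, Nat.card_Icc]
    simp
  have hpc : ∀ i ∈ Icc 1 N, p i * (c i * L i) ≤ lam * c i := fun i hi => by
    have hLi := hLpos i hi
    simp only [p]
    split_ifs with hui
    · exact le_of_eq (by field_simp)
    · have := hLmono i u (mem_Icc.mp hi).1 (not_lt.mp hui) (huκ.le.trans hκN)
      nlinarith [(hc.1 i hi).1]
  calc Vmin N κ L c ≤ ∑ i ∈ Icc 1 N, p i * (c i * L i) :=
        Vmin_le_sum_mul (fun i hi => (hp i hi).1) (fun i hi => (hp i hi).2) hpsum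
    _ ≤ ∑ i ∈ Icc 1 N, lam * c i := sum_le_sum hpc
    _ ≤ lam * K := by rw [← mul_sum]; exact mul_le_mul_of_nonneg_left hc.2 hlam
    _ = (κ - u) * (K / tailInvSum N L u) := by ring

end

theorem stmt_3_general (N : ℕ) (L : ℕ → ℝ)
    (hLpos : ∀ i ∈ Finset.Icc 1 N, 0 < L i)
    (hLmono : ∀ i j : ℕ, 1 ≤ i → i ≤ j → j ≤ N → L i ≤ L j)
    (κ : ℕ) (hκN : κ ≤ N)
    (u : ℕ) (huκ : u < κ)
    (hu : L u ≤ ((κ : ℝ) - (u : ℝ)) / ((N : ℝ) - (u : ℝ)) * Lharm N L (u + 1))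
    (humax : ∀ u' : ℕ, u' < κ →
      L u' ≤ ((κ : ℝ) - (u' : ℝ)) / ((N : ℝ) - (u' : ℝ)) * Lharm N L (u' + 1) → u' ≤ u)
    (K : ℝ) (hK0 : 0 < K)
    (hKlt : K < L (u + 1) * ∑ i ∈ Finset.Icc (u + 1) N, (L i)⁻¹) :
    Vval N κ K L = ((κ : ℝ) - (u : ℝ)) * (K / ((N : ℝ) - (u : ℝ))) * Lharm N L (u + 1) ∧
    ∃ c : ℕ → ℝ, Dmem N K c ∧ Vmin N κ L c = Vval N κ K L ∧
      ∀ i ∈ Finset.Icc 1 u, c i = 0 := by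
  have huN : u < N := huκ.trans_le hκN
  rw [div_mul_Lharm_succ huN] at hu
  have hnext : u + 1 < κ → ((κ : ℝ) - (u + 1 : ℕ)) / tailInvSum N L (u + 1) < L (u + 1) :=
    fun h => by
      have := mt (humax (u + 1) h) (by omega)
      rwa [not_le, div_mul_Lharm_succ (h.trans_le hκN)] at this
  have hcap := sub_le_mul_tailInvSum hLpos huκ hκN hnext
  have hgreatest : IsGreatest {v | ∃ c, Dmem N K c ∧ v = Vmin N κ L c}
      ((κ - u) * (K / tailInvSum N L u)) :=
    ⟨⟨_, Dmem_tailEqualizer hLpos hLmono huN hK0.le hKlt.le,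
        (Vmin_tailEqualizer hLpos huκ hκN hK0.le).symm⟩,
      by rintro _ ⟨c, hc, rfl⟩; exact Vmin_le_of_Dmem hLpos hLmono huκ hκN hu hcap hc⟩
  have hV : Vval N κ K L = (κ - u) * (K / tailInvSum N L u) := hgreatest.csSup_eq
  have hNu : (N : ℝ) - u ≠ 0 := sub_ne_zero.mpr (by exact_mod_cast huN.ne')
  refine ⟨by rw [hV, Lharm_succ]; field_simp, tailEqualizer N L u K,
    Dmem_tailEqualizer hLpos hLmono huN hK0.le hKlt.le,
    by rw [hV, Vmin_tailEqualizer hLpos huκ hκN hK0.le], fun i hi => ?_⟩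
  exact if_neg (by simp only [mem_Icc] at hi; omega)

/-- with `u*` the largest `u ∈ {0,…,κ−1}` with `((κ−u)/(N−u))·L̃_{u+1} ≥ L_u`
(the set is nonempty since `L_0 = 0`), if `0 < K < L_{u*+1} ∑_{i=u*+1}^N 1/L_i` then
`V(κ,K,L) = (κ−u*) (K/(N−u*)) L̃_{u*+1}` and some maximizer `c̃` has `c̃_i = 0` for
`i ∈ {1,…,u*}`. -/
theorem stmt_3 (N : ℕ) (hN : 1 ≤ N) (L : ℕ → ℝ) (hL0 : L 0 = 0)
    (hLpos : ∀ i ∈ Finset.Icc 1 N, 0 < L i)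
    (hLmono : ∀ i j : ℕ, 1 ≤ i → i ≤ j → j ≤ N → L i ≤ L j)
    (κ : ℕ) (hκ1 : 1 ≤ κ) (hκN : κ ≤ N)
    (u : ℕ) (huκ : u < κ)
    (hu : L u ≤ ((κ : ℝ) - (u : ℝ)) / ((N : ℝ) - (u : ℝ)) * Lharm N L (u + 1))
    (humax : ∀ u' : ℕ, u' < κ →
      L u' ≤ ((κ : ℝ) - (u' : ℝ)) / ((N : ℝ) - (u' : ℝ)) * Lharm N L (u' + 1) → u' ≤ u)
    (K : ℝ) (hK0 : 0 < K)
    (hKlt : K < L (u + 1) * ∑ i ∈ Finset.Icc (u + 1) N, (L i)⁻¹) :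
    Vval N κ K L = ((κ : ℝ) - (u : ℝ)) * (K / ((N : ℝ) - (u : ℝ))) * Lharm N L (u + 1) ∧
    ∃ c : ℕ → ℝ, Dmem N K c ∧ Vmin N κ L c = Vval N κ K L ∧
      ∀ i ∈ Finset.Icc 1 u, c i = 0 :=
  stmt_3_general N L hLpos hLmono κ hκN u huκ hu humax K hK0 hKlt
end

section
/- Let 1 ≤ κ ≤ N and set K̃ := κ + L_κ · ∑_{j=κ+1}^{N} 1/L_j. The function K ↦ V(κ,K,L) is nondecreasing on [0,∞), strictly increasing on [0, K̃], and constant equal to ∑_{i=1}^{κ} L_i on [K̃, ∞); in particular V(κ,K,L) < ∑_{i=1}^{κ} L_i whenever 0 ≤ K < K̃. -/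
open Finset

/-!
Write `T = ∑_{i ≤ κ} L_i`. The map `c ↦ 𝒱(c)` is a minimum of linear forms, hence concave, and
`D_N(K)` depends affinely on `K`, so `K ↦ V(K)` is concave and nondecreasing, and `V ≤ T` since
`c ≤ 1`. The allocation `c*_i = min(1, L_κ / L_i)` has `c*_i L_i = min(L_i, L_κ)`, so by
monotonicity of `L` every `κ`-subset is worth at least `T` under `c*`, and `c*` costs exactly
`K̃`: hence `V = T` on `[K̃, ∞)`. Conversely, testing `c` against `{1, …, κ}` and against
`{1, …, κ} \ {κ} ∪ {j}` gives `(c*_i - c_i) L_i ≤ T - 𝒱(c)` for every `i`, so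
`K̃ - ∑ c_i ≤ (T - 𝒱(c)) ∑ 1/L_i`, which forces `V(K) < T` for `K < K̃`. Concavity then turns
`V(K₁) < V(K̃)` into strict monotonicity on `[0, K̃]`.
-/

theorem ConcaveOn.lt_of_lt_of_le_right {f : ℝ → ℝ} {s : Set ℝ} (hf : ConcaveOn ℝ s f)
    {x y z : ℝ} (hx : x ∈ s) (hz : z ∈ s) (hxy : x < y) (hyz : y ≤ z) (h : f x < f z) :
    f x < f y := by
  rcases hyz.eq_or_lt with rfl | hyz
  · exact h
  by_contra! hyx
  exact hyx.not_gt (hf.left_lt_of_lt_right hx hz (Ioo_subset_openSegment ⟨hxy, hyz⟩)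
    (hyx.trans_lt h))

theorem Finset.sum_le_sum_of_card_eq {ι M : Type*} [DecidableEq ι] [AddCommMonoid M]
    [PartialOrder M] [IsOrderedAddMonoid M] {s t : Finset ι} {f : ι → M} {m : M}
    (hst : #s = #t) (hs : ∀ i ∈ s \ t, f i ≤ m) (ht : ∀ i ∈ t \ s, m ≤ f i) :
    ∑ i ∈ s, f i ≤ ∑ i ∈ t, f i :=
  calc ∑ i ∈ s, f i ≤ ∑ i ∈ s ∩ t, f i + #(s \ t) • m := by
        rw [← sum_inter_add_sum_sdiff s t]
        gcongr
        exact sum_le_card_nsmul _ _ _ hs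
    _ = ∑ i ∈ t ∩ s, f i + #(t \ s) • m := by rw [inter_comm, card_sdiff_comm hst]
    _ ≤ ∑ i ∈ t, f i := by
        rw [← sum_inter_add_sum_sdiff t s]
        gcongr
        exact card_nsmul_le_sum _ _ _ ht

theorem Finset.sum_Icc_one_eq_add {M : Type*} [AddCommMonoid M] {κ N : ℕ} (hκN : κ ≤ N)
    (f : ℕ → M) :
    ∑ i ∈ Icc 1 N, f i = ∑ i ∈ Icc 1 κ, f i + ∑ i ∈ Icc (κ + 1) N, f i := by
  simpa only [← Icc_add_one_left_eq_Ioc, zero_add] using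
    (sum_Ioc_consecutive f (Nat.zero_le κ) hκN).symm

section Vmin

variable {N κ : ℕ} {L c : ℕ → ℝ}

theorem vmin_le_sum {U : Finset ℕ} (hU : U ⊆ Icc 1 N) (hcard : #U = κ) :
    Vmin N κ L c ≤ ∑ i ∈ U, c i * L i := by
  refine csInf_le (Set.Finite.bddBelow ?_) ⟨U, hU, hcard, rfl⟩
  refine ((Icc 1 N).powerset.image fun U => ∑ i ∈ U, c i * L i).finite_toSet.subset ?_
  rintro _ ⟨V, hV, -, rfl⟩
  exact mem_coe.2 (mem_image_of_mem _ (mem_powerset.2 hV))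

theorem le_vmin (hκN : κ ≤ N) {a : ℝ}
    (h : ∀ U ⊆ Icc 1 N, #U = κ → a ≤ ∑ i ∈ U, c i * L i) : a ≤ Vmin N κ L c := by
  refine le_csInf ⟨_, Icc 1 κ, Icc_subset_Icc_right hκN, by simp, rfl⟩ ?_
  rintro _ ⟨U, hU, hcard, rfl⟩
  exact h U hU hcard

theorem vmin_le_sum_Icc (hκN : κ ≤ N) (hL : ∀ i ∈ Icc 1 N, 0 ≤ L i)
    (hc : ∀ i ∈ Icc 1 N, c i ≤ 1) : Vmin N κ L c ≤ ∑ i ∈ Icc 1 κ, L i := by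
  refine (vmin_le_sum (Icc_subset_Icc_right hκN) (by simp)).trans (sum_le_sum fun i hi => ?_)
  have hi : i ∈ Icc 1 N := Icc_subset_Icc_right hκN hi
  exact mul_le_of_le_one_left (hL i hi) (hc i hi)

theorem concaveOn_vmin (hκN : κ ≤ N) : ConcaveOn ℝ Set.univ (Vmin N κ L) := by
  refine ⟨convex_univ, fun c₁ _ c₂ _ a b ha hb _ => le_vmin hκN fun U hU hcard => ?_⟩
  calc a • Vmin N κ L c₁ + b • Vmin N κ L c₂
      ≤ a • ∑ i ∈ U, c₁ i * L i + b • ∑ i ∈ U, c₂ i * L i := by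
        gcongr <;> exact vmin_le_sum hU hcard
    _ = ∑ i ∈ U, (a • c₁ + b • c₂) i * L i := by
        simp only [smul_eq_mul, mul_sum, ← sum_add_distrib, Pi.add_apply, Pi.smul_apply]
        exact sum_congr rfl fun i _ => by ring

end Vmin

section Vval

variable {N κ : ℕ} {K K₁ K₂ : ℝ} {L c : ℕ → ℝ}

theorem dmem_zero (hK : 0 ≤ K) : Dmem N K 0 :=
  ⟨fun _ _ => ⟨le_rfl, zero_le_one⟩, by simpa using hK⟩

theorem Dmem.mono (hc : Dmem N K₁ c) (hK : K₁ ≤ K₂) : Dmem N K₂ c :=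
  ⟨hc.1, hc.2.trans hK⟩

theorem Dmem.smul_add_smul {c₁ c₂ : ℕ → ℝ} (hc₁ : Dmem N K₁ c₁) (hc₂ : Dmem N K₂ c₂)
    {a b : ℝ} (ha : 0 ≤ a) (hb : 0 ≤ b) (hab : a + b = 1) :
    Dmem N (a • K₁ + b • K₂) (a • c₁ + b • c₂) := by
  refine ⟨fun i hi => ?_, ?_⟩
  · obtain ⟨h₁, h₁'⟩ := hc₁.1 i hi
    obtain ⟨h₂, h₂'⟩ := hc₂.1 i hi
    simp only [Pi.add_apply, Pi.smul_apply, smul_eq_mul]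
    constructor <;> nlinarith
  · simp only [Pi.add_apply, Pi.smul_apply, smul_eq_mul, sum_add_distrib, ← mul_sum]
    gcongr
    exacts [hc₁.2, hc₂.2]

theorem vval_eq_sSup_image :
    Vval N κ K L = sSup (Vmin N κ L '' {c | Dmem N K c}) := by
  simp only [Vval, Set.image, Set.mem_ofPred_eq, eq_comm]

theorem bddAbove_image_vmin (hκN : κ ≤ N) (hL : ∀ i ∈ Icc 1 N, 0 ≤ L i) :
    BddAbove (Vmin N κ L '' {c | Dmem N K c}) :=
  ⟨_, Set.forall_mem_image.2 fun _ hc => vmin_le_sum_Icc hκN hL fun i hi => (hc.1 i hi).2⟩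

theorem vmin_le_vval (hκN : κ ≤ N) (hL : ∀ i ∈ Icc 1 N, 0 ≤ L i) (hc : Dmem N K c) :
    Vmin N κ L c ≤ Vval N κ K L := by
  rw [vval_eq_sSup_image]
  exact le_csSup (bddAbove_image_vmin hκN hL) ⟨c, hc, rfl⟩

theorem vval_le (hK : 0 ≤ K) {a : ℝ} (h : ∀ c, Dmem N K c → Vmin N κ L c ≤ a) :
    Vval N κ K L ≤ a := by
  rw [vval_eq_sSup_image]
  exact csSup_le ⟨_, 0, dmem_zero hK, rfl⟩ (Set.forall_mem_image.2 h)

theorem vval_le_sum_Icc (hκN : κ ≤ N) (hL : ∀ i ∈ Icc 1 N, 0 ≤ L i) (hK : 0 ≤ K) :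
    Vval N κ K L ≤ ∑ i ∈ Icc 1 κ, L i :=
  vval_le hK fun _ hc => vmin_le_sum_Icc hκN hL fun i hi => (hc.1 i hi).2

theorem monotoneOn_vval (hκN : κ ≤ N) (hL : ∀ i ∈ Icc 1 N, 0 ≤ L i) :
    MonotoneOn (fun K => Vval N κ K L) (Set.Ici 0) :=
  fun _ hK₁ _ _ hK => vval_le hK₁ fun _ hc => vmin_le_vval hκN hL (hc.mono hK)

theorem concaveOn_vval (hκN : κ ≤ N) (hL : ∀ i ∈ Icc 1 N, 0 ≤ L i) :
    ConcaveOn ℝ (Set.Ici 0) (fun K => Vval N κ K L) := by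
  refine ⟨convex_Ici 0, fun x hx y hy a b ha hb hab => ?_⟩
  have hne : ∀ {K : ℝ}, 0 ≤ K → (Vmin N κ L '' {c | Dmem N K c}).Nonempty :=
    fun hK => ⟨_, 0, dmem_zero hK, rfl⟩
  simp only [vval_eq_sSup_image, ← Real.sSup_smul_of_nonneg ha, ← Real.sSup_smul_of_nonneg hb]
  rw [← csSup_add ((hne hx).smul_set) ((bddAbove_image_vmin hκN hL).smul_of_nonneg ha)
    ((hne hy).smul_set) ((bddAbove_image_vmin hκN hL).smul_of_nonneg hb)]
  refine csSup_le ((hne hx).smul_set.add (hne hy).smul_set) ?_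
  rintro _ ⟨_, ⟨_, ⟨c₁, hc₁, rfl⟩, rfl⟩, _, ⟨_, ⟨c₂, hc₂, rfl⟩, rfl⟩, rfl⟩
  calc a • Vmin N κ L c₁ + b • Vmin N κ L c₂ ≤ Vmin N κ L (a • c₁ + b • c₂) :=
        (concaveOn_vmin hκN).2 trivial trivial ha hb hab
    _ ≤ _ :=
        le_csSup (bddAbove_image_vmin hκN hL) ⟨_, hc₁.smul_add_smul hc₂ ha hb hab, rfl⟩

end Vval

noncomputable def kTilde (N κ : ℕ) (L : ℕ → ℝ) : ℝ :=
  κ + L κ * ∑ j ∈ Icc (κ + 1) N, (L j)⁻¹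

noncomputable def cStar (κ : ℕ) (L : ℕ → ℝ) (i : ℕ) : ℝ :=
  if i ≤ κ then 1 else L κ / L i

section CStar

variable {N κ : ℕ} {L : ℕ → ℝ}

theorem cStar_mul_self {i : ℕ} (hi : L i ≠ 0) :
    cStar κ L i * L i = if i ≤ κ then L i else L κ := by
  unfold cStar
  split_ifs
  · exact one_mul _
  · exact div_mul_cancel₀ _ hi

theorem sum_cStar (hκN : κ ≤ N) : ∑ i ∈ Icc 1 N, cStar κ L i = kTilde N κ L := by
  rw [sum_Icc_one_eq_add hκN, kTilde, mul_sum]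
  congr 1
  · calc ∑ i ∈ Icc 1 κ, cStar κ L i = ∑ i ∈ Icc 1 κ, (1 : ℝ) :=
          sum_congr rfl fun i hi => if_pos (mem_Icc.1 hi).2
      _ = κ := by simp
  · refine sum_congr rfl fun i hi => ?_
    rw [cStar, if_neg (by linarith [(mem_Icc.1 hi).1]), div_eq_mul_inv]

theorem dmem_cStar (hLpos : ∀ i ∈ Icc 1 N, 0 < L i)
    (hLmono : ∀ i j : ℕ, 1 ≤ i → i ≤ j → j ≤ N → L i ≤ L j) (hκ1 : 1 ≤ κ) (hκN : κ ≤ N) :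
    Dmem N (kTilde N κ L) (cStar κ L) := by
  refine ⟨fun i hi => ?_, (sum_cStar hκN).le⟩
  obtain ⟨hi1, hiN⟩ := mem_Icc.1 hi
  unfold cStar
  split_ifs with hiκ
  · exact ⟨zero_le_one, le_rfl⟩
  · have hLκ := hLpos κ (mem_Icc.2 ⟨hκ1, hκN⟩)
    have hLi := hLpos i hi
    exact ⟨by positivity, div_le_one_of_le₀ (hLmono κ i hκ1 (by omega) hiN) hLi.le⟩

theorem vmin_cStar (hLpos : ∀ i ∈ Icc 1 N, 0 < L i)
    (hLmono : ∀ i j : ℕ, 1 ≤ i → i ≤ j → j ≤ N → L i ≤ L j) (hκN : κ ≤ N) :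
    Vmin N κ L (cStar κ L) = ∑ i ∈ Icc 1 κ, L i := by
  have hA : Icc 1 κ ⊆ Icc 1 N := Icc_subset_Icc_right hκN
  have hcStar : ∀ i ∈ Icc 1 N, cStar κ L i * L i = if i ≤ κ then L i else L κ :=
    fun i hi => cStar_mul_self (hLpos i hi).ne'
  have hsum : ∑ i ∈ Icc 1 κ, cStar κ L i * L i = ∑ i ∈ Icc 1 κ, L i :=
    sum_congr rfl fun i hi => by rw [hcStar i (hA hi), if_pos (mem_Icc.1 hi).2]
  refine le_antisymm (hsum ▸ vmin_le_sum hA (by simp)) (le_vmin hκN fun U hU hcard => ?_)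
  rw [← hsum]
  refine sum_le_sum_of_card_eq (m := L κ) (by simp [hcard]) (fun i hi => ?_) (fun i hi => ?_)
  · obtain ⟨hi1, hiκ⟩ := mem_Icc.1 (mem_sdiff.1 hi).1
    rw [hcStar i (hA (mem_sdiff.1 hi).1), if_pos hiκ]
    exact hLmono i κ hi1 hiκ hκN
  · obtain ⟨hiU, hiA⟩ := mem_sdiff.1 hi
    have hiκ : ¬i ≤ κ := fun hiκ => hiA (mem_Icc.2 ⟨(mem_Icc.1 (hU hiU)).1, hiκ⟩)
    rw [hcStar i (hU hiU), if_neg hiκ]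

/-- The two test sets are `{1, …, κ}` for `i ≤ κ` and `{1, …, κ - 1, i}` for `i > κ`. -/
theorem cStar_sub_mul_le (hLpos : ∀ i ∈ Icc 1 N, 0 < L i) (hκ1 : 1 ≤ κ) (hκN : κ ≤ N)
    {c : ℕ → ℝ} (hc : ∀ i ∈ Icc 1 N, c i ≤ 1) {i : ℕ} (hi : i ∈ Icc 1 N) :
    (cStar κ L i - c i) * L i ≤ ∑ j ∈ Icc 1 κ, L j - Vmin N κ L c := by
  have hA : Icc 1 κ ⊆ Icc 1 N := Icc_subset_Icc_right hκN
  have hdef : ∀ j ∈ Icc 1 κ, 0 ≤ (1 - c j) * L j := fun j hj =>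
    mul_nonneg (sub_nonneg.2 (hc j (hA hj))) (hLpos j (hA hj)).le
  have hsplit : ∑ j ∈ Icc 1 κ, L j
      = ∑ j ∈ Icc 1 κ, c j * L j + ∑ j ∈ Icc 1 κ, (1 - c j) * L j := by
    rw [← sum_add_distrib]
    exact sum_congr rfl fun j _ => by ring
  rw [sub_mul, cStar_mul_self (hLpos i hi).ne']
  split_ifs with hiκ
  · have hiA : i ∈ Icc 1 κ := mem_Icc.2 ⟨(mem_Icc.1 hi).1, hiκ⟩
    have hterm := single_le_sum hdef hiA
    have hvmin := vmin_le_sum (κ := κ) (L := L) (c := c) hA (by simp)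
    linarith
  · have hκA : κ ∈ Icc 1 κ := mem_Icc.2 ⟨hκ1, le_rfl⟩
    have hiE : i ∉ (Icc 1 κ).erase κ := fun h => hiκ (mem_Icc.1 (mem_of_mem_erase h)).2
    have hU : insert i ((Icc 1 κ).erase κ) ⊆ Icc 1 N :=
      insert_subset hi ((erase_subset _ _).trans hA)
    have hcard : #(insert i ((Icc 1 κ).erase κ)) = κ := by
      rw [card_insert_of_notMem hiE, card_erase_of_mem hκA, Nat.card_Icc]
      omega
    have hvmin := vmin_le_sum (L := L) (c := c) hU hcard
    rw [sum_insert hiE] at hvmin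
    have hrest : ∑ j ∈ (Icc 1 κ).erase κ, c j * L j ≤ ∑ j ∈ (Icc 1 κ).erase κ, L j :=
      sum_le_sum fun j hj => by linarith [hdef j (mem_of_mem_erase hj)]
    have herase := sum_erase_add _ L hκA
    linarith

theorem vval_le_sum_Icc_sub (hLpos : ∀ i ∈ Icc 1 N, 0 < L i) (hκ1 : 1 ≤ κ) (hκN : κ ≤ N)
    {K : ℝ} (hK : 0 ≤ K) :
    Vval N κ K L ≤ ∑ i ∈ Icc 1 κ, L i - (kTilde N κ L - K) / ∑ i ∈ Icc 1 N, (L i)⁻¹ := by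
  have hpos : 0 < ∑ i ∈ Icc 1 N, (L i)⁻¹ :=
    sum_pos (fun i hi => inv_pos.2 (hLpos i hi)) ⟨κ, mem_Icc.2 ⟨hκ1, hκN⟩⟩
  refine vval_le hK fun c hc => ?_
  have hdeficit : kTilde N κ L - ∑ i ∈ Icc 1 N, c i
      ≤ (∑ i ∈ Icc 1 κ, L i - Vmin N κ L c) * ∑ i ∈ Icc 1 N, (L i)⁻¹ := by
    rw [← sum_cStar hκN, ← sum_sub_distrib, mul_sum]
    refine sum_le_sum fun i hi => ?_
    rw [← div_eq_mul_inv, le_div_iff₀ (hLpos i hi)]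
    exact cStar_sub_mul_le hLpos hκ1 hκN (fun j hj => (hc.1 j hj).2) hi
  rw [le_sub_comm, div_le_iff₀ hpos]
  linarith [hc.2]

theorem vval_eq_sum_Icc (hLpos : ∀ i ∈ Icc 1 N, 0 < L i)
    (hLmono : ∀ i j : ℕ, 1 ≤ i → i ≤ j → j ≤ N → L i ≤ L j) (hκ1 : 1 ≤ κ) (hκN : κ ≤ N)
    {K : ℝ} (hK : kTilde N κ L ≤ K) : Vval N κ K L = ∑ i ∈ Icc 1 κ, L i := by
  have hL : ∀ i ∈ Icc 1 N, 0 ≤ L i := fun i hi => (hLpos i hi).le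
  have hcStar := dmem_cStar hLpos hLmono hκ1 hκN
  have hK0 : 0 ≤ K := (sum_nonneg fun i hi => (hcStar.1 i hi).1).trans (hcStar.2.trans hK)
  refine le_antisymm (vval_le_sum_Icc hκN hL hK0) ?_
  exact vmin_cStar hLpos hLmono hκN ▸ vmin_le_vval hκN hL (hcStar.mono hK)

theorem vval_lt_sum_Icc (hLpos : ∀ i ∈ Icc 1 N, 0 < L i) (hκ1 : 1 ≤ κ) (hκN : κ ≤ N)
    {K : ℝ} (hK : 0 ≤ K) (hKκ : K < kTilde N κ L) : Vval N κ K L < ∑ i ∈ Icc 1 κ, L i := by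
  refine (vval_le_sum_Icc_sub hLpos hκ1 hκN hK).trans_lt
    (sub_lt_self _ (div_pos (by linarith) ?_))
  exact sum_pos (fun i hi => inv_pos.2 (hLpos i hi)) ⟨κ, mem_Icc.2 ⟨hκ1, hκN⟩⟩

end CStar

theorem stmt_6_general (N : ℕ) (L : ℕ → ℝ)
    (hLpos : ∀ i ∈ Finset.Icc 1 N, 0 < L i)
    (hLmono : ∀ i j : ℕ, 1 ≤ i → i ≤ j → j ≤ N → L i ≤ L j)
    (κ : ℕ) (hκ1 : 1 ≤ κ) (hκN : κ ≤ N)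
    (Ktilde : ℝ) (hKt : Ktilde = (κ : ℝ) + L κ * ∑ j ∈ Finset.Icc (κ + 1) N, (L j)⁻¹) :
    (∀ K1 K2 : ℝ, 0 ≤ K1 → K1 ≤ K2 → Vval N κ K1 L ≤ Vval N κ K2 L) ∧
    (∀ K1 K2 : ℝ, 0 ≤ K1 → K1 < K2 → K2 ≤ Ktilde → Vval N κ K1 L < Vval N κ K2 L) ∧
    (∀ K : ℝ, Ktilde ≤ K → Vval N κ K L = ∑ i ∈ Finset.Icc 1 κ, L i) ∧
    (∀ K : ℝ, 0 ≤ K → K < Ktilde → Vval N κ K L < ∑ i ∈ Finset.Icc 1 κ, L i) := by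
  obtain rfl : Ktilde = kTilde N κ L := hKt
  have hL : ∀ i ∈ Icc 1 N, 0 ≤ L i := fun i hi => (hLpos i hi).le
  refine ⟨fun K₁ K₂ hK₁ hK => monotoneOn_vval hκN hL hK₁ (hK₁.trans hK) hK,
    fun K₁ K₂ hK₁ hK hK₂ => ?_, fun K => vval_eq_sum_Icc hLpos hLmono hκ1 hκN,
    fun K => vval_lt_sum_Icc hLpos hκ1 hκN⟩
  have hlt : Vval N κ K₁ L < Vval N κ (kTilde N κ L) L := by
    rw [vval_eq_sum_Icc hLpos hLmono hκ1 hκN le_rfl]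
    exact vval_lt_sum_Icc hLpos hκ1 hκN hK₁ (hK.trans_le hK₂)
  exact (concaveOn_vval hκN hL).lt_of_lt_of_le_right hK₁ (hK₁.trans (hK.le.trans hK₂))
    hK hK₂ hlt

/-- with `K̃ := κ + L_κ ∑_{j=κ+1}^N 1/L_j`, the map `K ↦ V(κ,K,L)` is
nondecreasing on `[0,∞)`, strictly increasing on `[0,K̃]`, constant equal to `∑_{i=1}^κ L_i`
on `[K̃,∞)`, and in particular `V(κ,K,L) < ∑_{i=1}^κ L_i` whenever `0 ≤ K < K̃`. -/
theorem stmt_6 (N : ℕ) (hN : 1 ≤ N) (L : ℕ → ℝ)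
    (hLpos : ∀ i ∈ Finset.Icc 1 N, 0 < L i)
    (hLmono : ∀ i j : ℕ, 1 ≤ i → i ≤ j → j ≤ N → L i ≤ L j)
    (κ : ℕ) (hκ1 : 1 ≤ κ) (hκN : κ ≤ N)
    (Ktilde : ℝ) (hKt : Ktilde = (κ : ℝ) + L κ * ∑ j ∈ Finset.Icc (κ + 1) N, (L j)⁻¹) :
    (∀ K1 K2 : ℝ, 0 ≤ K1 → K1 ≤ K2 → Vval N κ K1 L ≤ Vval N κ K2 L) ∧
    (∀ K1 K2 : ℝ, 0 ≤ K1 → K1 < K2 → K2 ≤ Ktilde → Vval N κ K1 L < Vval N κ K2 L) ∧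
    (∀ K : ℝ, Ktilde ≤ K → Vval N κ K L = ∑ i ∈ Finset.Icc 1 κ, L i) ∧
    (∀ K : ℝ, 0 ≤ K → K < Ktilde → Vval N κ K L < ∑ i ∈ Finset.Icc 1 κ, L i) :=
  stmt_6_general N L hLpos hLmono κ hκ1 hκN Ktilde hKt
end

section
/- (Lemma A.1.) Let M ≥ 1, A ⊆ {1,…,M}, k ∈ {1,…,M}, K > 0, and let I_i > 0 for i ∈ A and J_j > 0 for j ∉ A. Let F_1(A) ≤ F_2(A) ≤ ⋯ ≤ F_M(A) be the increasing rearrangement of the M values {I_i : i ∈ A} ∪ {J_j : j ∉ A}. Then for every B ⊆ {1,…,M} with |B △ A| < k and every c ∈ [0,1]^M with ∑_{i=1}^M c_i ≤ K, one has min over G ⊆ {1,…,M} with |G △ B| ≥ k of ( ∑_{i ∈ A∖G} c_i I_i + ∑_{j ∈ G∖A} c_j J_j ) ≤ V(k, K, F(A)). -/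
open Finset

open scoped symmDiff

lemma exists_bijOn_of_map_eq (f g : ℕ → ℝ) :
    ∀ s t : Finset ℕ, s.val.map f = t.val.map g →
    ∃ σ : ℕ → ℕ, Set.BijOn σ ↑s ↑t ∧ ∀ i ∈ s, g (σ i) = f i := by
  intro s
  induction s using Finset.induction_on with
  | empty =>
      intro t ht
      have : t.val.map g = 0 := by simpa using ht.symm
      have ht0 : t = ∅ := by
        have : t.val = 0 := Multiset.eq_zero_of_forall_notMem (by
          intro x hx
          have hm : g x ∈ t.val.map g := Multiset.mem_map_of_mem _ hx
          rw [this] at hm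
          simp at hm)
        exact Finset.val_eq_zero.mp this
      subst ht0
      exact ⟨id, by simp [Set.bijOn_empty], by simp⟩
  | @insert a s' ha ih =>
      intro t ht
      have hval : (insert a s').val = a ::ₘ s'.val := Finset.insert_val_of_notMem ha
      rw [hval, Multiset.map_cons] at ht
      have hfa : f a ∈ t.val.map g := by rw [← ht]; exact Multiset.mem_cons_self _ _
      obtain ⟨b, hb, hgb⟩ := Multiset.mem_map.mp hfa
      have hbt : b ∈ t := hb
      have htval : t.val = b ::ₘ (t.erase b).val := by
        rw [Finset.erase_val, Multiset.cons_erase hb]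
      rw [htval, Multiset.map_cons, hgb] at ht
      have ht' : s'.val.map f = (t.erase b).val.map g :=
        (Multiset.cons_inj_right _).mp ht
      obtain ⟨σ', hσ'bij, hσ'⟩ := ih (t.erase b) ht'
      refine ⟨fun i => if i = a then b else σ' i, ?_, ?_⟩
      · have h1 : Set.BijOn (fun i => if i = a then b else σ' i) ↑s' ↑(t.erase b) := by
          refine hσ'bij.congr ?_
          intro i hi
          have : i ≠ a := by rintro rfl; exact ha hi
          simp [this]
        have h2 := h1.insert (a := a) (by
          simp only [if_pos rfl]
          simp [Finset.mem_coe, Finset.mem_erase])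
        rw [show (if a = a then b else σ' a) = b from if_pos rfl] at h2
        have hc1 : (insert a ↑s' : Set ℕ) = ↑(insert a s') := by simp
        have hc2 : (insert b ↑(t.erase b) : Set ℕ) = ↑t := by
          rw [← Finset.coe_insert, Finset.insert_erase hbt]
        rwa [hc1, hc2] at h2
      · intro i hi
        rcases Finset.mem_insert.mp hi with rfl | hi'
        · simp [hgb]
        · have : i ≠ a := by rintro rfl; exact ha hi'
          simp only [if_neg this]
          exact hσ' i hi'

/-- Lemma A.1: with `F_1(A) ≤ ⋯ ≤ F_M(A)` the increasing rearrangement of the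
values `{I_i : i ∈ A} ∪ {J_j : j ∉ A}`, for every `B ⊆ {1,…,M}` with `|B ∆ A| < k` and every
`c ∈ [0,1]^M` with `∑ c_i ≤ K`,
`min_{G : |G ∆ B| ≥ k} (∑_{i∈A∖G} c_i I_i + ∑_{j∈G∖A} c_j J_j) ≤ V(k,K,F(A))`. -/
theorem stmt_9 (M : ℕ) (hM : 1 ≤ M) (A : Finset ℕ) (hA : A ⊆ Finset.Icc 1 M)
    (k : ℕ) (hk1 : 1 ≤ k) (hkM : k ≤ M) (K : ℝ) (hK : 0 < K)
    (I J : ℕ → ℝ) (hI : ∀ i ∈ A, 0 < I i)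
    (hJ : ∀ j ∈ Finset.Icc 1 M, j ∉ A → 0 < J j)
    (F : ℕ → ℝ)
    (hFmono : ∀ i j : ℕ, 1 ≤ i → i ≤ j → j ≤ M → F i ≤ F j)
    (hFperm : (Finset.Icc 1 M).val.map F =
      (Finset.Icc 1 M).val.map (fun i => if i ∈ A then I i else J i))
    (B : Finset ℕ) (hB : B ⊆ Finset.Icc 1 M) (hBA : (B ∆ A).card < k)
    (c : ℕ → ℝ) (hc : ∀ i ∈ Finset.Icc 1 M, 0 ≤ c i ∧ c i ≤ 1)
    (hcK : ∑ i ∈ Finset.Icc 1 M, c i ≤ K) :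
    sInf {x : ℝ | ∃ G : Finset ℕ, G ⊆ Finset.Icc 1 M ∧ k ≤ (G ∆ B).card ∧
        x = (∑ i ∈ A \ G, c i * I i) + ∑ j ∈ G \ A, c j * J j}
      ≤ Vval M k K F := by
  classical
  set s : Finset ℕ := Finset.Icc 1 M with hs
  set H : ℕ → ℝ := fun i => if i ∈ A then I i else J i with hH
  obtain ⟨π, hπbij, hπ⟩ := exists_bijOn_of_map_eq F H s s hFperm
  have hπmem : ∀ i ∈ s, π i ∈ s := fun i hi => hπbij.mapsTo hi
  have hHpos : ∀ i ∈ s, 0 < H i := by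
    intro i hi
    by_cases h : i ∈ A
    · simpa [hH, h] using hI i h
    · simpa [hH, h] using hJ i hi h
  set c' : ℕ → ℝ := fun i => c (π i) with hc'
  have hD' : Dmem M K c' := by
    constructor
    · intro i hi; exact hc (π i) (hπmem i hi)
    · have hsum : ∑ i ∈ s, c' i = ∑ j ∈ s, c j := by
        refine Finset.sum_bij (fun a _ => π a) (fun a ha => hπmem a ha) ?_ ?_ ?_
        · intro a ha b hb hab; exact hπbij.injOn ha hb hab
        · intro b hb
          obtain ⟨a, ha, rfl⟩ := hπbij.surjOn hb
          exact ⟨a, ha, rfl⟩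
        · intro a ha; rfl
      calc ∑ i ∈ Finset.Icc 1 M, c' i = ∑ j ∈ Finset.Icc 1 M, c j := hsum
        _ ≤ K := hcK
  set R : ℝ := ∑ i ∈ s, |F i| with hR
  have habs : ∀ (c'' : ℕ → ℝ), Dmem M K c'' → ∀ U : Finset ℕ, U ⊆ s →
      |∑ i ∈ U, c'' i * F i| ≤ R := by
    intro c'' hd U hU
    calc |∑ i ∈ U, c'' i * F i| ≤ ∑ i ∈ U, |c'' i * F i| := Finset.abs_sum_le_sum_abs _ _
      _ ≤ ∑ i ∈ U, |F i| := by
          refine Finset.sum_le_sum ?_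
          intro i hi
          rw [abs_mul]
          have h1 := hd.1 i (hU hi)
          refine mul_le_of_le_one_left (abs_nonneg _) ?_
          rw [abs_of_nonneg h1.1]; exact h1.2
      _ ≤ R := Finset.sum_le_sum_of_subset_of_nonneg hU (fun i _ _ => abs_nonneg _)
  set U0 : Finset ℕ := Finset.Icc 1 k with hU0
  have hU0s : U0 ⊆ s := Finset.Icc_subset_Icc_right hkM
  have hU0card : U0.card = k := by simp [hU0, Nat.card_Icc]
  have hVbdd : ∀ (c'' : ℕ → ℝ), Dmem M K c'' → Vmin M k F c'' ≤ R := by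
    intro c'' hd
    have hmem0 : (∑ i ∈ U0, c'' i * F i) ∈
        {x : ℝ | ∃ U : Finset ℕ, U ⊆ Finset.Icc 1 M ∧ U.card = k ∧
          x = ∑ i ∈ U, c'' i * F i} := ⟨U0, hU0s, hU0card, rfl⟩
    have hbb : BddBelow {x : ℝ | ∃ U : Finset ℕ, U ⊆ Finset.Icc 1 M ∧ U.card = k ∧
        x = ∑ i ∈ U, c'' i * F i} := by
      refine ⟨-R, ?_⟩
      rintro x ⟨U, hU, _, rfl⟩
      have := habs c'' hd U hU
      linarith [neg_abs_le (∑ i ∈ U, c'' i * F i)]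
    calc Vmin M k F c'' ≤ ∑ i ∈ U0, c'' i * F i := csInf_le hbb hmem0
      _ ≤ R := (le_abs_self _).trans (habs c'' hd U0 hU0s)
  have hbddV : BddAbove {v : ℝ | ∃ c'' : ℕ → ℝ, Dmem M K c'' ∧ v = Vmin M k F c''} := by
    refine ⟨R, ?_⟩
    rintro v ⟨c'', hd, rfl⟩
    exact hVbdd c'' hd
  have hVv : Vmin M k F c' ≤ Vval M k K F := by
    rw [Vval]
    exact le_csSup hbddV ⟨c', hD', rfl⟩
  refine le_trans ?_ hVv
  rw [Vmin]
  refine le_csInf ⟨_, U0, hU0s, hU0card, rfl⟩ ?_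
  rintro x ⟨U, hUs, hUk, rfl⟩
  have hinjU : Set.InjOn π ↑U := hπbij.injOn.mono (by exact_mod_cast hUs)
  set W : Finset ℕ := U.image π with hW
  have hWs : W ⊆ s := by
    intro j hj
    obtain ⟨i, hi, rfl⟩ := Finset.mem_image.mp hj
    exact hπmem i (hUs hi)
  have hWcard : W.card = k := by rw [hW, Finset.card_image_of_injOn hinjU, hUk]
  have hxW : ∑ i ∈ U, c' i * F i = ∑ j ∈ W, c j * H j := by
    rw [hW, Finset.sum_image (fun a ha b hb => hinjU ha hb)]
    refine Finset.sum_congr rfl ?_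
    intro i hi
    rw [hπ i (hUs hi)]
  set D : Finset ℕ := B ∆ A with hDdef
  set G : Finset ℕ := A ∆ (W \ D) with hG
  have hAG : A ∆ G = W \ D := by rw [hG]; exact symmDiff_symmDiff_cancel_left A _
  have hGs : G ⊆ s := by
    have h1 : G ≤ A ⊔ (W \ D) := symmDiff_le_sup
    rw [Finset.sup_eq_union] at h1
    exact h1.trans (Finset.union_subset hA ((Finset.sdiff_subset).trans hWs))
  have hGB : G ∆ B = (W \ D) ∪ D := by
    rw [hG, symmDiff_comm A (W \ D), symmDiff_assoc, symmDiff_comm A B, ← hDdef]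
    have hd : Disjoint (W \ D) D := Finset.sdiff_disjoint
    rw [hd.symmDiff_eq_sup, Finset.sup_eq_union]
  have hcardGB : k ≤ (G ∆ B).card := by
    have hWsub : W ⊆ (W \ D) ∪ D := by
      intro w hw
      by_cases h : w ∈ D <;> simp [h, hw]
    calc k = W.card := hWcard.symm
      _ ≤ ((W \ D) ∪ D).card := Finset.card_le_card hWsub
      _ = (G ∆ B).card := by rw [hGB]
  have hsplit : (∑ i ∈ A \ G, c i * I i) + ∑ j ∈ G \ A, c j * J j
      = ∑ i ∈ A ∆ G, c i * H i := by
    rw [symmDiff_def, Finset.sup_eq_union, Finset.sum_union disjoint_sdiff_sdiff]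
    congr 1
    · refine Finset.sum_congr rfl ?_
      intro i hi
      have : i ∈ A := (Finset.mem_sdiff.mp hi).1
      simp [hH, this]
    · refine Finset.sum_congr rfl ?_
      intro j hj
      have : j ∉ A := (Finset.mem_sdiff.mp hj).2
      simp [hH, this]
  have hbddL : BddBelow {x : ℝ | ∃ G : Finset ℕ, G ⊆ Finset.Icc 1 M ∧ k ≤ (G ∆ B).card ∧
      x = (∑ i ∈ A \ G, c i * I i) + ∑ j ∈ G \ A, c j * J j} := by
    refine ⟨0, ?_⟩
    rintro x ⟨G', hG's, _, rfl⟩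
    have h1 : (0:ℝ) ≤ ∑ i ∈ A \ G', c i * I i := by
      refine Finset.sum_nonneg ?_
      intro i hi
      have hiA : i ∈ A := (Finset.mem_sdiff.mp hi).1
      exact mul_nonneg (hc i (hA hiA)).1 (hI i hiA).le
    have h2 : (0:ℝ) ≤ ∑ j ∈ G' \ A, c j * J j := by
      refine Finset.sum_nonneg ?_
      intro j hj
      have hjs : j ∈ s := hG's (Finset.mem_sdiff.mp hj).1
      exact mul_nonneg (hc j hjs).1 (hJ j hjs (Finset.mem_sdiff.mp hj).2).le
    linarith
  have hmemL : (∑ i ∈ A \ G, c i * I i) + ∑ j ∈ G \ A, c j * J j ∈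
      {x : ℝ | ∃ G : Finset ℕ, G ⊆ Finset.Icc 1 M ∧ k ≤ (G ∆ B).card ∧
        x = (∑ i ∈ A \ G, c i * I i) + ∑ j ∈ G \ A, c j * J j} := ⟨G, hGs, hcardGB, rfl⟩
  calc sInf {x : ℝ | ∃ G : Finset ℕ, G ⊆ Finset.Icc 1 M ∧ k ≤ (G ∆ B).card ∧
        x = (∑ i ∈ A \ G, c i * I i) + ∑ j ∈ G \ A, c j * J j}
      ≤ (∑ i ∈ A \ G, c i * I i) + ∑ j ∈ G \ A, c j * J j := csInf_le hbddL hmemL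
    _ = ∑ i ∈ W \ D, c i * H i := by rw [hsplit, hAG]
    _ ≤ ∑ i ∈ W, c i * H i := by
        refine Finset.sum_le_sum_of_subset_of_nonneg Finset.sdiff_subset ?_
        intro i hi _
        exact mul_nonneg (hc i (hWs hi)).1 (hHpos i (hWs hi)).le
    _ = ∑ i ∈ U, c' i * F i := hxW.symm
end

section
/- (Lemma A.2, case A = ∅.) Let M ≥ 1, let J_1,…,J_M > 0, let k₁, k₂ ≥ 1 be integers with k₁ + k₂ ≤ M, and let K > 0. Let J_{(1)} ≤ ⋯ ≤ J_{(M)} be the increasing rearrangement of J_1,…,J_M, and let 𝐉_{k₁−1} := (J_{(k₁)}, J_{(k₁+1)}, …, J_{(M)}) be the increasing list of the M − k₁ + 1 largest values. Then for every B ⊆ {1,…,M} with |B| < k₁ and every c ∈ [0,1]^M with ∑_{i=1}^M c_i ≤ K: min over G ⊆ {1,…,M} with |G ∖ B| ≥ k₂ of ∑_{j ∈ G} c_j J_j ≤ V(k₂, K, 𝐉_{k₁−1}). -/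
/-!
Let `N = M - k₁ + 1`. At least `i + k₁ - 1` indices carry a value `J_j ≤ J_{(i+k₁-1)}`, and at most
`k₁ - 1` of them lie in `B`, so a greedy matching picks distinct `s(1),…,s(N) ∉ B` with
`J_{s(i)} ≤ J_{(i+k₁-1)}`. The weights `c'_i := c_{s(i)}` lie in `D_N(K)`, and every `k₂`-subset `U`
of `{1,…,N}` yields the admissible set `G = s(U)`, whose cost is at most `∑_{i∈U} c'_i J_{(i+k₁-1)}`.
-/

open Finset

lemma finite_setOf_exists_subset {ι β : Type*} (A : Finset ι) (P : Finset ι → Prop)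
    (F : Finset ι → β) : {x | ∃ G, G ⊆ A ∧ P G ∧ x = F G}.Finite :=
  (A.powerset.finite_toSet.image F).subset <| by
    rintro _ ⟨G, hG, -, rfl⟩
    exact ⟨G, by simpa using hG, rfl⟩

lemma exists_injOn_le_of_le_card_filter {ι α : Type*} [Nonempty ι] [LinearOrder α]
    (f : ι → α) (g : ℕ → α) (n : ℕ) (S : Finset ι)
    (hS : ∀ i ∈ Icc 1 n, i ≤ #{j ∈ S | f j ≤ g i}) :
    ∃ s : ℕ → ι, (∀ i ∈ Icc 1 n, s i ∈ S ∧ f (s i) ≤ g i) ∧ Set.InjOn s (Icc 1 n) := by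
  classical
  induction n generalizing S with
  | zero => exact ⟨fun _ => Classical.arbitrary ι, by simp, by simp⟩
  | succ n ih =>
    set T := {j ∈ S | f j ≤ g (n + 1)}
    have hT : n + 1 ≤ #T := hS (n + 1) (by simp)
    obtain ⟨x, hxT, hxmax⟩ := T.exists_max_image f (card_pos.1 (by omega))
    obtain ⟨hxS, hxg⟩ := mem_filter.1 hxT
    -- Taking `x` of largest value among the candidates for `n + 1` keeps the condition for `i ≤ n`:
    -- if `f x ≤ g i`, then all of `T` is counted at `i`.
    have hS' : ∀ i ∈ Icc 1 n, i ≤ #{j ∈ S.erase x | f j ≤ g i} := by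
      intro i hi
      rw [filter_erase]
      by_cases hxi : f x ≤ g i
      · have hTi : T ⊆ {j ∈ S | f j ≤ g i} := fun j hj =>
          mem_filter.2 ⟨(mem_filter.1 hj).1, (hxmax j hj).trans hxi⟩
        have := card_le_card hTi
        rw [card_erase_of_mem (mem_filter.2 ⟨hxS, hxi⟩)]
        simp only [mem_Icc] at hi
        omega
      · have hx : x ∉ {j ∈ S | f j ≤ g i} := fun h => hxi (mem_filter.1 h).2
        rw [erase_eq_of_notMem hx]
        exact hS i (Icc_subset_Icc_right n.le_succ hi)
    obtain ⟨s, hs, hinj⟩ := ih (S.erase x) hS'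
    refine ⟨Function.update s (n + 1) x, fun i hi => ?_, fun i hi j hj hij => ?_⟩
    · rcases eq_or_ne i (n + 1) with rfl | hne
      · simpa using ⟨hxS, hxg⟩
      · have hi' : i ∈ Icc 1 n := by simp only [mem_Icc] at hi ⊢; omega
        rw [Function.update_of_ne hne]
        exact ⟨mem_of_mem_erase (hs i hi').1, (hs i hi').2⟩
    · simp only [coe_Icc, Set.mem_Icc] at hi hj
      by_cases hi1 : i = n + 1 <;> by_cases hj1 : j = n + 1
      · rw [hi1, hj1]
      all_goals simp only [hi1, hj1, ne_eq, not_false_eq_true, Function.update_of_ne,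
        Function.update_self] at hij
      · exact absurd hij.symm (ne_of_mem_erase (hs j (by simp only [mem_Icc]; omega)).1)
      · exact absurd hij (ne_of_mem_erase (hs i (by simp only [mem_Icc]; omega)).1)
      · exact hinj (by simp only [coe_Icc, Set.mem_Icc]; omega)
          (by simp only [coe_Icc, Set.mem_Icc]; omega) hij

lemma le_card_filter_sdiff_le_shift {M k₁ i : ℕ} {J Js : ℕ → ℝ} {B : Finset ℕ}
    (hmono : MonotoneOn Js (Set.Icc 1 M))
    (hperm : (Icc 1 M).val.map Js = (Icc 1 M).val.map J)
    (hB : #B < k₁) (hk₁ : k₁ ≤ M) (hi : i ∈ Icc 1 (M - k₁ + 1)) :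
    i ≤ #{j ∈ Icc 1 M \ B | J j ≤ Js (i + (k₁ - 1))} := by
  have ht : i + (k₁ - 1) ∈ Set.Icc 1 M := by
    simp only [mem_Icc, Set.mem_Icc] at hi ⊢
    omega
  set t := i + (k₁ - 1)
  have hsorted : t ≤ #{j ∈ Icc 1 M | Js j ≤ Js t} := by
    calc t = #(Icc 1 t) := by simp
      _ ≤ _ := card_le_card fun j hj => by
        simp only [mem_Icc, mem_filter] at hj ⊢
        exact ⟨⟨hj.1, hj.2.trans ht.2⟩, hmono ⟨hj.1, hj.2.trans ht.2⟩ ht hj.2⟩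
  have hrearr : #{j ∈ Icc 1 M | Js j ≤ Js t} = #{j ∈ Icc 1 M | J j ≤ Js t} := by
    simpa only [Multiset.countP_map, card_def, filter_val] using
      congrArg (Multiset.countP (· ≤ Js t)) hperm
  have hdiff : #{j ∈ Icc 1 M | J j ≤ Js t} - #B ≤ #{j ∈ Icc 1 M \ B | J j ≤ Js t} :=
    (le_card_sdiff _ _).trans (card_le_card fun j hj => by simp_all)
  omega

lemma dmem_comp {M N : ℕ} {K : ℝ} {c : ℕ → ℝ} {s : ℕ → ℕ}
    (hc : ∀ i ∈ Icc 1 M, 0 ≤ c i ∧ c i ≤ 1) (hcK : ∑ i ∈ Icc 1 M, c i ≤ K)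
    (hs : ∀ i ∈ Icc 1 N, s i ∈ Icc 1 M) (hinj : Set.InjOn s (Icc 1 N)) :
    Dmem N K (fun i => c (s i)) := by
  refine ⟨fun i hi => hc _ (hs i hi), ?_⟩
  calc ∑ i ∈ Icc 1 N, c (s i) = ∑ j ∈ (Icc 1 N).image s, c j := (sum_image hinj).symm
    _ ≤ ∑ j ∈ Icc 1 M, c j := sum_le_sum_of_subset_of_nonneg
        (image_subset_iff.2 hs) fun j hj _ => (hc j hj).1
    _ ≤ K := hcK

lemma Vmin_le_sum_abs {N κ : ℕ} {L c : ℕ → ℝ} (hc : ∀ i ∈ Icc 1 N, 0 ≤ c i ∧ c i ≤ 1) :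
    Vmin N κ L c ≤ ∑ i ∈ Icc 1 N, |L i| := by
  rw [Vmin]
  set X := {x : ℝ | ∃ U : Finset ℕ, U ⊆ Icc 1 N ∧ U.card = κ ∧ x = ∑ i ∈ U, c i * L i}
  have hsum_nonneg : 0 ≤ ∑ i ∈ Icc 1 N, |L i| := sum_nonneg fun i _ => abs_nonneg _
  rcases X.eq_empty_or_nonempty with hX | ⟨_, U, hU, hUκ, rfl⟩
  · rw [hX, Real.sInf_empty]
    exact hsum_nonneg
  calc sInf X ≤ ∑ i ∈ U, c i * L i :=
        csInf_le (finite_setOf_exists_subset _ _ _).bddBelow ⟨U, hU, hUκ, rfl⟩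
    _ ≤ ∑ i ∈ U, |L i| := sum_le_sum fun i hi => by
        obtain ⟨h0, h1⟩ := hc i (hU hi)
        calc c i * L i ≤ c i * |L i| := mul_le_mul_of_nonneg_left (le_abs_self _) h0
          _ ≤ |L i| := mul_le_of_le_one_left (abs_nonneg _) h1
    _ ≤ ∑ i ∈ Icc 1 N, |L i| :=
        sum_le_sum_of_subset_of_nonneg hU fun i _ _ => abs_nonneg _

lemma Vmin_le_Vval {N κ : ℕ} {K : ℝ} {L c : ℕ → ℝ} (hc : Dmem N K c) :
    Vmin N κ L c ≤ Vval N κ K L :=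
  le_csSup ⟨_, by rintro _ ⟨c', hc', rfl⟩; exact Vmin_le_sum_abs hc'.1⟩ ⟨c, hc, rfl⟩

lemma sInf_le_Vmin_comp {M N κ : ℕ} {J L c : ℕ → ℝ} {B : Finset ℕ} {s : ℕ → ℕ}
    (hκ : κ ≤ N) (hc : ∀ i ∈ Icc 1 M, 0 ≤ c i)
    (hs : ∀ i ∈ Icc 1 N, s i ∈ Icc 1 M \ B ∧ J (s i) ≤ L i) (hinj : Set.InjOn s (Icc 1 N)) :
    sInf {x : ℝ | ∃ G : Finset ℕ, G ⊆ Icc 1 M ∧ κ ≤ (G \ B).card ∧ x = ∑ j ∈ G, c j * J j}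
      ≤ Vmin N κ L (fun i => c (s i)) := by
  refine le_csInf ⟨_, Icc 1 κ, Icc_subset_Icc_right hκ, by simp, rfl⟩ ?_
  rintro _ ⟨U, hU, rfl, rfl⟩
  have hinjU : Set.InjOn s U := hinj.mono (coe_subset.2 hU)
  have hsU : U.image s ⊆ Icc 1 M \ B := image_subset_iff.2 fun i hi => (hs i (hU hi)).1
  have hG : U.card ≤ (U.image s \ B).card := by
    rw [sdiff_eq_self_of_disjoint (disjoint_sdiff_self_left.mono_left hsU),
      card_image_of_injOn hinjU]
  calc sInf _ ≤ ∑ j ∈ U.image s, c j * J j :=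
        csInf_le (finite_setOf_exists_subset _ _ _).bddBelow
          ⟨_, hsU.trans sdiff_subset, hG, rfl⟩
    _ = ∑ i ∈ U, c (s i) * J (s i) := sum_image hinjU
    _ ≤ ∑ i ∈ U, c (s i) * L i := sum_le_sum fun i hi =>
        have hsi := hs i (hU hi)
        mul_le_mul_of_nonneg_left hsi.2 (hc _ (mem_sdiff.1 hsi.1).1)

theorem stmt_10_general (M : ℕ) (J : ℕ → ℝ)
    (k₁ k₂ : ℕ) (hkM : k₁ + k₂ ≤ M)
    (K : ℝ)
    (Js : ℕ → ℝ)
    (hJsmono : ∀ i j : ℕ, 1 ≤ i → i ≤ j → j ≤ M → Js i ≤ Js j)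
    (hJsperm : (Finset.Icc 1 M).val.map Js = (Finset.Icc 1 M).val.map J)
    (B : Finset ℕ) (hBcard : B.card < k₁)
    (c : ℕ → ℝ) (hc : ∀ i ∈ Finset.Icc 1 M, 0 ≤ c i ∧ c i ≤ 1)
    (hcK : ∑ i ∈ Finset.Icc 1 M, c i ≤ K) :
    sInf {x : ℝ | ∃ G : Finset ℕ, G ⊆ Finset.Icc 1 M ∧ k₂ ≤ (G \ B).card ∧
        x = ∑ j ∈ G, c j * J j}
      ≤ Vval (M - k₁ + 1) k₂ K (fun i => Js (i + (k₁ - 1))) := by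
  have hmono : MonotoneOn Js (Set.Icc 1 M) := fun i hi j hj hij => hJsmono i j hi.1 hij hj.2
  obtain ⟨s, hs, hinj⟩ := exists_injOn_le_of_le_card_filter J (fun i => Js (i + (k₁ - 1)))
    (M - k₁ + 1) (Icc 1 M \ B) fun i hi =>
      le_card_filter_sdiff_le_shift hmono hJsperm hBcard (by omega) hi
  calc _ ≤ Vmin (M - k₁ + 1) k₂ (fun i => Js (i + (k₁ - 1))) (fun i => c (s i)) :=
        sInf_le_Vmin_comp (by omega) (fun i hi => (hc i hi).1) hs hinj
    _ ≤ _ := Vmin_le_Vval <| dmem_comp hc hcK (fun i hi => (mem_sdiff.1 (hs i hi).1).1) hinj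

/-- Lemma A.2, case `A = ∅`: with `Js` the increasing rearrangement of
`J_1,…,J_M` and `𝐉_{k₁−1} = (J_{(k₁)},…,J_{(M)})`, for every `B ⊆ {1,…,M}` with `|B| < k₁`
and every `c ∈ [0,1]^M` with `∑ c_i ≤ K`,
`min_{G : |G ∖ B| ≥ k₂} ∑_{j ∈ G} c_j J_j ≤ V(k₂, K, 𝐉_{k₁−1})`. -/
theorem stmt_10 (M : ℕ) (hM : 1 ≤ M) (J : ℕ → ℝ)
    (hJ : ∀ j ∈ Finset.Icc 1 M, 0 < J j)
    (k₁ k₂ : ℕ) (hk₁ : 1 ≤ k₁) (hk₂ : 1 ≤ k₂) (hkM : k₁ + k₂ ≤ M)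
    (K : ℝ) (hK : 0 < K)
    (Js : ℕ → ℝ)
    (hJsmono : ∀ i j : ℕ, 1 ≤ i → i ≤ j → j ≤ M → Js i ≤ Js j)
    (hJsperm : (Finset.Icc 1 M).val.map Js = (Finset.Icc 1 M).val.map J)
    (B : Finset ℕ) (hB : B ⊆ Finset.Icc 1 M) (hBcard : B.card < k₁)
    (c : ℕ → ℝ) (hc : ∀ i ∈ Finset.Icc 1 M, 0 ≤ c i ∧ c i ≤ 1)
    (hcK : ∑ i ∈ Finset.Icc 1 M, c i ≤ K) :
    sInf {x : ℝ | ∃ G : Finset ℕ, G ⊆ Finset.Icc 1 M ∧ k₂ ≤ (G \ B).card ∧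
        x = ∑ j ∈ G, c j * J j}
      ≤ Vval (M - k₁ + 1) k₂ K (fun i => Js (i + (k₁ - 1))) :=
  stmt_10_general M J k₁ k₂ hkM K Js hJsmono hJsperm B hBcard c hc hcK
end

section
/- (Lemma A.2, case A = {1,…,M}.) Let M ≥ 1, let I_1,…,I_M > 0, let k₁, k₂ ≥ 1 be integers with k₁ + k₂ ≤ M, and let K > 0. Let I_{(1)} ≤ ⋯ ≤ I_{(M)} be the increasing rearrangement of I_1,…,I_M, and let 𝐈_{k₂−1} := (I_{(k₂)}, I_{(k₂+1)}, …, I_{(M)}) be the increasing list of the M − k₂ + 1 largest values. Then for every B ⊆ {1,…,M} with |{1,…,M} ∖ B| < k₂ and every c ∈ [0,1]^M with ∑_{i=1}^M c_i ≤ K: min over G ⊆ {1,…,M} with |B ∖ G| ≥ k₁ of ∑_{i ∈ {1,…,M} ∖ G} c_i I_i ≤ V(k₁, K, 𝐈_{k₂−1}). -/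
open Finset

/-- Lemma A.2, case `A = {1,…,M}`: with `Is` the increasing rearrangement of
`I_1,…,I_M` and `𝐈_{k₂−1} = (I_{(k₂)},…,I_{(M)})`, for every `B ⊆ {1,…,M}` with
`|{1,…,M} ∖ B| < k₂` and every `c ∈ [0,1]^M` with `∑ c_i ≤ K`,
`min_{G : |B ∖ G| ≥ k₁} ∑_{i ∈ {1,…,M} ∖ G} c_i I_i ≤ V(k₁, K, 𝐈_{k₂−1})`. -/
theorem stmt_11 (M : ℕ) (hM : 1 ≤ M) (I : ℕ → ℝ)
    (hI : ∀ i ∈ Finset.Icc 1 M, 0 < I i)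
    (k₁ k₂ : ℕ) (hk₁ : 1 ≤ k₁) (hk₂ : 1 ≤ k₂) (hkM : k₁ + k₂ ≤ M)
    (K : ℝ) (hK : 0 < K)
    (Is : ℕ → ℝ)
    (hIsmono : ∀ i j : ℕ, 1 ≤ i → i ≤ j → j ≤ M → Is i ≤ Is j)
    (hIsperm : (Finset.Icc 1 M).val.map Is = (Finset.Icc 1 M).val.map I)
    (B : Finset ℕ) (hB : B ⊆ Finset.Icc 1 M) (hBcard : (Finset.Icc 1 M \ B).card < k₂)
    (c : ℕ → ℝ) (hc : ∀ i ∈ Finset.Icc 1 M, 0 ≤ c i ∧ c i ≤ 1)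
    (hcK : ∑ i ∈ Finset.Icc 1 M, c i ≤ K) :
    sInf {x : ℝ | ∃ G : Finset ℕ, G ⊆ Finset.Icc 1 M ∧ k₁ ≤ (B \ G).card ∧
        x = ∑ i ∈ Finset.Icc 1 M \ G, c i * I i}
      ≤ Vval (M - k₂ + 1) k₁ K (fun i => Is (i + (k₂ - 1))) := by
  classical
  set N := M - k₂ + 1 with hN
  set L : ℕ → ℝ := fun i => Is (i + (k₂ - 1)) with hL
  have hk₂M : k₂ ≤ M := by omega
  have hk₁N : k₁ ≤ N := by omega
  -- `Is` is positive on `Icc 1 M`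
  have hIspos : ∀ t ∈ Finset.Icc 1 M, 0 < Is t := by
    intro t ht
    have : Is t ∈ (Finset.Icc 1 M).val.map Is := Multiset.mem_map_of_mem Is ht
    rw [hIsperm] at this
    obtain ⟨j, hj, hje⟩ := Multiset.mem_map.mp this
    rw [← hje]; exact hI j hj
  -- `L` is nonnegative on `Icc 1 N`
  have hLpos : ∀ i ∈ Finset.Icc 1 N, 0 < L i := by
    intro i hi
    simp only [Finset.mem_Icc] at hi
    exact hIspos _ (Finset.mem_Icc.mpr (by omega))
  -- counting lemma: at least `t` indices `i` in `Icc 1 M` satisfy `I i ≤ Is t`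
  have hcount : ∀ t ∈ Finset.Icc 1 M,
      t ≤ ((Finset.Icc 1 M).filter (fun i => I i ≤ Is t)).card := by
    intro t ht
    simp only [Finset.mem_Icc] at ht
    have h1 : ((Finset.Icc 1 M).filter (fun i => I i ≤ Is t)).card
        = ((Finset.Icc 1 M).filter (fun i => Is i ≤ Is t)).card := by
      have e1 : ((Finset.Icc 1 M).filter (fun i => I i ≤ Is t)).card
          = Multiset.countP (fun x => x ≤ Is t) ((Finset.Icc 1 M).val.map I) := by
        rw [Multiset.countP_map]
        rfl
      have e2 : ((Finset.Icc 1 M).filter (fun i => Is i ≤ Is t)).card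
          = Multiset.countP (fun x => x ≤ Is t) ((Finset.Icc 1 M).val.map Is) := by
        rw [Multiset.countP_map]
        rfl
      rw [e1, e2, hIsperm]
    rw [h1]
    have hsub : Finset.Icc 1 t ⊆ (Finset.Icc 1 M).filter (fun i => Is i ≤ Is t) := by
      intro i hi
      simp only [Finset.mem_Icc] at hi
      refine Finset.mem_filter.mpr ⟨Finset.mem_Icc.mpr ⟨hi.1, le_trans hi.2 ht.2⟩, ?_⟩
      exact hIsmono i t hi.1 hi.2 ht.2
    calc t = (Finset.Icc 1 t).card := by rw [Nat.card_Icc]; omega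
    _ ≤ _ := Finset.card_le_card hsub
  -- the Hall system
  set T : {x // x ∈ Finset.Icc 1 N} → Finset ℕ :=
    fun x => B.filter (fun i => I i ≤ Is (x.1 + (k₂ - 1))) with hT
  have hTcard : ∀ x : {x // x ∈ Finset.Icc 1 N}, x.1 ≤ (T x).card := by
    intro x
    have hx := Finset.mem_Icc.mp x.2
    set t := x.1 + (k₂ - 1) with htdef
    have htM : t ∈ Finset.Icc 1 M := Finset.mem_Icc.mpr (by omega)
    have hfull := hcount t htM
    have hsub : (Finset.Icc 1 M).filter (fun i => I i ≤ Is t)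
        ⊆ T x ∪ (Finset.Icc 1 M \ B) := by
      intro i hi
      obtain ⟨hiM, hile⟩ := Finset.mem_filter.mp hi
      by_cases hiB : i ∈ B
      · exact Finset.mem_union_left _ (Finset.mem_filter.mpr ⟨hiB, hile⟩)
      · exact Finset.mem_union_right _ (Finset.mem_sdiff.mpr ⟨hiM, hiB⟩)
    have h2 : ((Finset.Icc 1 M).filter (fun i => I i ≤ Is t)).card
        ≤ (T x).card + (Finset.Icc 1 M \ B).card :=
      le_trans (Finset.card_le_card hsub) (Finset.card_union_le _ _)
    omega
  have hHall : ∀ s : Finset {x // x ∈ Finset.Icc 1 N}, s.card ≤ (s.biUnion T).card := by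
    intro s
    rcases s.eq_empty_or_nonempty with rfl | hs
    · simp
    · have hne : (s.image (fun x => x.1)).Nonempty := hs.image _
      set m := (s.image (fun x => x.1)).max' hne with hm
      obtain ⟨x, hxs, hxm⟩ := Finset.mem_image.mp ((s.image (fun x => x.1)).max'_mem hne)
      have hcards : s.card = (s.image (fun x => x.1)).card :=
        (Finset.card_image_of_injective s Subtype.val_injective).symm
      have himg : s.image (fun x => x.1) ⊆ Finset.Icc 1 m := by
        intro i hi
        obtain ⟨y, hys, hyi⟩ := Finset.mem_image.mp hi
        have hy := Finset.mem_Icc.mp y.2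
        refine Finset.mem_Icc.mpr ⟨by omega, ?_⟩
        rw [hm]
        exact (s.image (fun x => x.1)).le_max' _ hi
      have h1 : s.card ≤ m := by
        rw [hcards]
        calc (s.image (fun x => x.1)).card ≤ (Finset.Icc 1 m).card :=
              Finset.card_le_card himg
        _ = m := by rw [Nat.card_Icc]; omega
      have h2 : m ≤ (T x).card := by
        rw [hm, ← hxm]; exact hTcard x
      have h3 : T x ⊆ s.biUnion T := Finset.subset_biUnion_of_mem T hxs
      exact le_trans h1 (le_trans h2 (Finset.card_le_card h3))
  obtain ⟨f, hfinj, hfmem⟩ :=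
    (Finset.all_card_le_biUnion_card_iff_exists_injective T).mp hHall
  have hfB : ∀ x, f x ∈ B := fun x => (Finset.mem_filter.mp (hfmem x)).1
  have hfI : ∀ x : {x // x ∈ Finset.Icc 1 N}, I (f x) ≤ Is (x.1 + (k₂ - 1)) :=
    fun x => (Finset.mem_filter.mp (hfmem x)).2
  have hfM : ∀ x, f x ∈ Finset.Icc 1 M := fun x => hB (hfB x)
  -- the competing coefficient vector
  set c' : ℕ → ℝ := fun j =>
    if h : j ∈ Finset.Icc 1 N then c (f ⟨j, h⟩) else 0 with hc'
  have hc'val : ∀ j (h : j ∈ Finset.Icc 1 N), c' j = c (f ⟨j, h⟩) := by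
    intro j h; simp only [hc', dif_pos h]
  have hDmem : Dmem N K c' := by
    constructor
    · intro i hi
      rw [hc'val i hi]
      exact hc _ (hfM _)
    · have e : ∑ j ∈ Finset.Icc 1 N, c' j
          = ∑ x ∈ (Finset.Icc 1 N).attach, c (f x) := by
        rw [← Finset.sum_attach (Finset.Icc 1 N) c']
        exact Finset.sum_congr rfl (fun x _ => hc'val x.1 x.2)
      rw [e]
      have e2 : ∑ x ∈ (Finset.Icc 1 N).attach, c (f x)
          = ∑ i ∈ (Finset.Icc 1 N).attach.image f, c i :=
        (Finset.sum_image (fun x _ y _ h => hfinj h)).symm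
      rw [e2]
      refine le_trans (Finset.sum_le_sum_of_subset_of_nonneg ?_ ?_) hcK
      · intro i hi
        obtain ⟨x, _, hxe⟩ := Finset.mem_image.mp hi
        exact hxe ▸ hfM x
      · intro i hi _
        exact (hc i hi).1
  -- bound the LHS by `Vmin N k₁ L c'`
  have hbddLHS : BddBelow {x : ℝ | ∃ G : Finset ℕ, G ⊆ Finset.Icc 1 M ∧
      k₁ ≤ (B \ G).card ∧ x = ∑ i ∈ Finset.Icc 1 M \ G, c i * I i} := by
    refine ⟨0, ?_⟩
    rintro x ⟨G, hG, _, rfl⟩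
    refine Finset.sum_nonneg (fun i hi => ?_)
    have hiM : i ∈ Finset.Icc 1 M := (Finset.mem_sdiff.mp hi).1
    exact mul_nonneg (hc i hiM).1 (le_of_lt (hI i hiM))
  have hmain : sInf {x : ℝ | ∃ G : Finset ℕ, G ⊆ Finset.Icc 1 M ∧ k₁ ≤ (B \ G).card ∧
      x = ∑ i ∈ Finset.Icc 1 M \ G, c i * I i} ≤ Vmin N k₁ L c' := by
    refine le_csInf ?_ ?_
    · refine ⟨∑ i ∈ Finset.Icc 1 k₁, c' i * L i, Finset.Icc 1 k₁,
        Finset.Icc_subset_Icc le_rfl hk₁N, by rw [Nat.card_Icc]; omega, rfl⟩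
    · rintro x ⟨U, hU, hUcard, rfl⟩
      set S : Finset ℕ := U.attach.image (fun u => f ⟨u.1, hU u.2⟩) with hS
      have hSinj : ∀ u ∈ U.attach, ∀ v ∈ U.attach,
          f ⟨u.1, hU u.2⟩ = f ⟨v.1, hU v.2⟩ → u = v := by
        intro u _ v _ h
        have h2 : (u : ℕ) = (v : ℕ) := congrArg (Subtype.val : {x // x ∈ Finset.Icc 1 N} → ℕ) (hfinj h)
        exact Subtype.ext h2
      have hScard : S.card = k₁ := by
        rw [hS, Finset.card_image_of_injOn hSinj, Finset.card_attach, hUcard]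
      have hSB : S ⊆ B := by
        intro i hi
        obtain ⟨u, _, hue⟩ := Finset.mem_image.mp hi
        exact hue ▸ hfB _
      have hSM : S ⊆ Finset.Icc 1 M := fun i hi => hB (hSB hi)
      set G : Finset ℕ := Finset.Icc 1 M \ S with hG
      have hGmem : (∑ i ∈ Finset.Icc 1 M \ G, c i * I i) ∈
          {x : ℝ | ∃ G : Finset ℕ, G ⊆ Finset.Icc 1 M ∧ k₁ ≤ (B \ G).card ∧
            x = ∑ i ∈ Finset.Icc 1 M \ G, c i * I i} := by
        refine ⟨G, Finset.sdiff_subset, ?_, rfl⟩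
        have hsub : S ⊆ B \ G := by
          intro i hi
          refine Finset.mem_sdiff.mpr ⟨hSB hi, ?_⟩
          simp only [hG, Finset.mem_sdiff]
          tauto
        calc k₁ = S.card := hScard.symm
        _ ≤ _ := Finset.card_le_card hsub
      have hGeq : Finset.Icc 1 M \ G = S := by
        exact _root_.sdiff_sdiff_eq_self hSM
      calc sInf {x : ℝ | ∃ G : Finset ℕ, G ⊆ Finset.Icc 1 M ∧ k₁ ≤ (B \ G).card ∧
            x = ∑ i ∈ Finset.Icc 1 M \ G, c i * I i}
          ≤ ∑ i ∈ Finset.Icc 1 M \ G, c i * I i := csInf_le hbddLHS hGmem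
        _ = ∑ i ∈ S, c i * I i := by rw [hGeq]
        _ = ∑ u ∈ U.attach, c (f ⟨u.1, hU u.2⟩) * I (f ⟨u.1, hU u.2⟩) := by
            rw [hS]
            exact Finset.sum_image hSinj
        _ ≤ ∑ u ∈ U.attach, c (f ⟨u.1, hU u.2⟩) * Is (u.1 + (k₂ - 1)) := by
            refine Finset.sum_le_sum (fun u _ => ?_)
            exact mul_le_mul_of_nonneg_left (hfI ⟨u.1, hU u.2⟩)
              (hc _ (hfM ⟨u.1, hU u.2⟩)).1
        _ = ∑ u ∈ U.attach, c' u.1 * L u.1 := by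
            refine Finset.sum_congr rfl (fun u _ => ?_)
            rw [hc'val u.1 (hU u.2)]
        _ = ∑ i ∈ U, c' i * L i := Finset.sum_attach U (fun i => c' i * L i)
  -- conclude via `Vval`
  refine le_trans hmain (le_csSup ?_ ⟨c', hDmem, rfl⟩)
  -- boundedness above of the `Vval` set
  refine ⟨∑ i ∈ Finset.Icc 1 k₁, L i, ?_⟩
  rintro v ⟨c'', hc''D, rfl⟩
  have hmem0 : (∑ i ∈ Finset.Icc 1 k₁, c'' i * L i) ∈
      {x : ℝ | ∃ U : Finset ℕ, U ⊆ Finset.Icc 1 N ∧ U.card = k₁ ∧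
        x = ∑ i ∈ U, c'' i * L i} :=
    ⟨Finset.Icc 1 k₁, Finset.Icc_subset_Icc le_rfl hk₁N, by rw [Nat.card_Icc]; omega, rfl⟩
  have hbdd0 : BddBelow {x : ℝ | ∃ U : Finset ℕ, U ⊆ Finset.Icc 1 N ∧ U.card = k₁ ∧
      x = ∑ i ∈ U, c'' i * L i} := by
    refine ⟨0, ?_⟩
    rintro x ⟨U, hU, _, rfl⟩
    refine Finset.sum_nonneg (fun i hi => ?_)
    exact mul_nonneg (hc''D.1 i (hU hi)).1 (le_of_lt (hLpos i (hU hi)))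
  refine le_trans (csInf_le hbdd0 hmem0) (Finset.sum_le_sum (fun i hi => ?_))
  have hiN : i ∈ Finset.Icc 1 N := Finset.Icc_subset_Icc le_rfl hk₁N hi
  calc c'' i * L i ≤ 1 * L i :=
        mul_le_mul_of_nonneg_right (hc''D.1 i hiN).2 (le_of_lt (hLpos i hiN))
  _ = L i := one_mul _
end

section
/- Let S be a finite set, w : S → [0,∞), T ⊆ S with l := |S ∖ T|, and let m be an integer with 1 ≤ m ≤ |T|. Then the sum of the m smallest values of w restricted to T is at most ∑_{t=l+1}^{l+m} w_{(t)}, where w_{(1)} ≤ w_{(2)} ≤ ⋯ ≤ w_{(|S|)} denotes the increasing rearrangement of the values of w on S. -/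
/-!
Sorted increasingly, the values of `w` on `T` form a sublist of the values on `S`, which `g`
lists in order. A sorted sublist omitting `l` entries has its `i`-th entry bounded by the
`(i + l)`-th entry of the full list, so the `m` smallest values on `T` — realized by some
`m`-element subset of `T` — are bounded termwise by `g (l + 1), …, g (l + m)`.
-/

open Finset

namespace List

theorem Sublist.forall₂_le_drop {α : Type*} [Preorder α] {l₁ l₂ : List α} (h : l₁ <+ l₂)
    (hs : l₂.SortedLE) : Forall₂ (· ≤ ·) l₁ (l₂.drop (l₂.length - l₁.length)) := by
  rw [sortedLE_iff_pairwise] at hs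
  induction h with
  | slnil => simp
  | @cons l₁ l₂ a h ih =>
    rw [length_cons, Nat.sub_add_comm h.length_le, drop_succ_cons]
    exact ih (pairwise_cons.mp hs).2
  | @cons_cons l₁ l₂ a h ih =>
    obtain ⟨ha, hs⟩ := pairwise_cons.mp hs
    simp only [length_cons, Nat.add_sub_add_right] at ih ⊢
    rcases hd : l₂.length - l₁.length with _ | d <;> rw [hd] at ih
    · exact .cons le_rfl (ih hs)
    · have hd' : d < l₂.length := by omega
      rw [drop_succ_cons, drop_eq_getElem_cons hd']
      exact .cons (ha _ (getElem_mem hd')) (ih hs)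

theorem sortedLE_map_range' {M : Type*} [Preorder M] {g : ℕ → M} {s n : ℕ}
    (hg : MonotoneOn g (Set.Ico s (s + n))) : ((range' s n).map g).SortedLE := by
  refine sortedLE_of_getElem_le_getElem_of_le fun i j hi hj hij => ?_
  simp only [length_map, length_range'] at hi hj
  simp only [getElem_map, getElem_range', Nat.one_mul]
  exact hg ⟨by omega, by omega⟩ ⟨by omega, by omega⟩ (by omega)

theorem sum_take_drop_map_range'_one {M : Type*} [AddCommMonoid M] (g : ℕ → M) {n l m : ℕ}
    (h : l + m ≤ n) :
    ((((range' 1 n).map g).drop l).take m).sum = ∑ t ∈ Icc (l + 1) (l + m), g t := by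
  rw [← map_drop, ← map_take, drop_range', take_range'_of_length_ge (by omega), Finset.sum,
    Nat.Icc_eq_range']
  simp [Nat.add_comm 1 l, show l + m + 1 - (l + 1) = m by omega]

end List

theorem Multiset.exists_le_map_eq_of_le_map {α β : Type*} {f : α → β} {s : Multiset α}
    {t : Multiset β} (h : t ≤ s.map f) : ∃ u ≤ s, u.map f = t := by
  induction s using Quotient.inductionOn with | h l =>
  induction t using Quotient.inductionOn with | h l₀ =>
  obtain ⟨l₁, hperm, hsub⟩ := coe_le.mp h
  obtain ⟨l', hl', rfl⟩ := List.sublist_map_iff.mp hsub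
  exact ⟨l', coe_le.mpr hl'.subperm, coe_eq_coe.mpr hperm⟩

namespace Finset

theorem exists_subset_map_val_eq_of_le_map {α β : Type*} {f : α → β} {s : Finset α}
    {t : Multiset β} (h : t ≤ s.val.map f) : ∃ u ⊆ s, u.val.map f = t := by
  obtain ⟨u, hus, rfl⟩ := Multiset.exists_le_map_eq_of_le_map h
  exact ⟨⟨u, Multiset.nodup_of_le hus s.nodup⟩, val_le_iff.mp hus, rfl⟩

theorem exists_subset_card_eq_sum_le_sum_take_drop {α M : Type*} [AddCommMonoid M]
    [LinearOrder M] [IsOrderedAddMonoid M] {T : Finset α} {w : α → M} {L : List M}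
    (hL : L.SortedLE) (hT : T.val.map w ≤ L) {m : ℕ} (hm : m ≤ T.card) :
    ∃ U ⊆ T, U.card = m ∧ ∑ a ∈ U, w a ≤ ((L.drop (L.length - T.card)).take m).sum := by
  set LT := (T.val.map w).sort
  have hLT : LT.Sublist L := by
    refine List.sublist_of_subperm_of_sortedLE (Multiset.coe_le.mp ?_)
      (Multiset.pairwise_sort _ _).sortedLE hL
    rwa [Multiset.sort_eq]
  have hlen : LT.length = T.card := by simp [LT]
  obtain ⟨U, hUT, hU⟩ := exists_subset_map_val_eq_of_le_map (f := w) (s := T)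
    (t := LT.take m) <| by
      rw [← Multiset.sort_eq (T.val.map w) (· ≤ ·)]
      exact Multiset.coe_le.mpr (List.take_sublist m LT).subperm
  refine ⟨U, hUT, ?_, ?_⟩
  · rw [card_def, ← Multiset.card_map w, hU, Multiset.coe_card, List.length_take, hlen,
      min_eq_left hm]
  · rw [sum_eq_multiset_sum, hU, Multiset.sum_coe, ← hlen]
    exact (List.forall₂_take m (hLT.forall₂_le_drop hL)).sum_le_sum

end Finset

theorem stmt_12_general {α : Type*} [DecidableEq α] (S : Finset α) (w : α → ℝ)
    (T : Finset α) (hT : T ⊆ S)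
    (g : ℕ → ℝ)
    (hgmono : ∀ i j : ℕ, 1 ≤ i → i ≤ j → j ≤ S.card → g i ≤ g j)
    (hgperm : (Finset.Icc 1 S.card).val.map g = S.val.map w)
    (m : ℕ) (hmT : m ≤ T.card) :
    sInf {x : ℝ | ∃ U : Finset α, U ⊆ T ∧ U.card = m ∧ x = ∑ a ∈ U, w a}
      ≤ ∑ t ∈ Finset.Icc ((S \ T).card + 1) ((S \ T).card + m), g t := by
  set L := (List.range' 1 S.card).map g
  have hL : L.SortedLE :=
    List.sortedLE_map_range' fun i hi j hj hij => hgmono i j hi.1 hij (by have := hj.2; omega)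
  have hLS : (L : Multiset ℝ) = S.val.map w := by
    rw [← hgperm, Nat.Icc_eq_range']
    simp [L]
  obtain ⟨U, hUT, hUm, hU⟩ := T.exists_subset_card_eq_sum_le_sum_take_drop hL
    (hLS ▸ Multiset.map_le_map (val_le_iff.mpr hT)) hmT
  have hbdd : BddBelow {x : ℝ | ∃ U : Finset α, U ⊆ T ∧ U.card = m ∧ x = ∑ a ∈ U, w a} :=
    (T.powerset.image fun U => ∑ a ∈ U, w a).bddBelow.mono <| by
      rintro _ ⟨V, hV, -, rfl⟩
      simpa using ⟨V, hV, rfl⟩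
  have hTS := card_le_card hT
  calc _ ≤ ∑ a ∈ U, w a := csInf_le hbdd ⟨U, hUT, hUm, rfl⟩
    _ ≤ ((L.drop (L.length - T.card)).take m).sum := hU
    _ = _ := by
      rw [List.length_map, List.length_range', ← card_sdiff_of_subset hT,
        List.sum_take_drop_map_range'_one g (by rw [card_sdiff_of_subset hT]; omega)]

/-- order-statistics selection bound: if `T ⊆ S`, `l = |S ∖ T|`, and
`1 ≤ m ≤ |T|`, then the sum of the `m` smallest values of `w` on `T` is at most
`∑_{t=l+1}^{l+m} w_{(t)}`, where `w_{(1)} ≤ ⋯ ≤ w_{(|S|)}` (encoded by the monotone function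
`g` on `{1,…,|S|}` whose multiset of values equals that of `w` on `S`) is the increasing
rearrangement of the values of `w` on `S`. -/
theorem stmt_12 {α : Type*} [DecidableEq α] (S : Finset α) (w : α → ℝ)
    (hw : ∀ a ∈ S, 0 ≤ w a) (T : Finset α) (hT : T ⊆ S)
    (g : ℕ → ℝ)
    (hgmono : ∀ i j : ℕ, 1 ≤ i → i ≤ j → j ≤ S.card → g i ≤ g j)
    (hgperm : (Finset.Icc 1 S.card).val.map g = S.val.map w)
    (m : ℕ) (hm1 : 1 ≤ m) (hmT : m ≤ T.card) :
    sInf {x : ℝ | ∃ U : Finset α, U ⊆ T ∧ U.card = m ∧ x = ∑ a ∈ U, w a}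
      ≤ ∑ t ∈ Finset.Icc ((S \ T).card + 1) ((S \ T).card + m), g t :=
  stmt_12_general S w T hT g hgmono hgperm m hmT
end

section
/- Let (Ω, 𝓕, P) be a probability space with filtration (𝓕_n)_{n≥0}, let δ ∈ (0, 1/2) and C_p > 0, and let (X_n)_{n≥1} be {0,1}-valued random variables such that X_n is 𝓕_n-measurable and E[X_n | 𝓕_{n−1}] ≥ C_p · n^{−δ} almost surely for every n ≥ 1. Then for every C ∈ (0, C_p): ∑_{n=1}^{∞} n · P( ∑_{m=1}^{n} X_m < C · n^{1−δ} ) < ∞. -/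
/-!
The compensated sums `M_n = ∑_{m ≤ n} (E[X_m | ℱ_{m-1}] - X_m)` have increments in `[-1, 1]` with
zero conditional mean, so `exp x ≤ x + exp (x ^ 2)` gives `E[exp (l M_n)] ≤ exp (n l²)`, and
Chernoff's bound gives the Azuma–Hoeffding estimate `P(M_n ≥ t) ≤ exp (-t² / (4 n))`.
Since `∑_{m ≤ n} m^{-δ} ≥ n^{1-δ}`, the hypothesis makes the compensator at least `C_p n^{1-δ}`,
so `∑_{m ≤ n} X_m < C n^{1-δ}` forces `M_n ≥ (C_p - C) n^{1-δ}`, an event of probability at most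
`exp (-(C_p - C)² n^{1-2δ} / 4)`; and `n exp (-c n^{1-2δ})` is summable because `δ < 1/2`.
-/

open MeasureTheory Filter Finset Real
open scoped Topology

lemma Real.exp_le_add_exp_sq (x : ℝ) : exp x ≤ x + exp (x ^ 2) := by
  have hsq := add_one_le_exp (x ^ 2)
  rcases le_or_gt |x| 1 with hx | hx
  · have := (abs_le.1 (abs_exp_sub_one_sub_id_le hx)).2
    linarith
  rcases le_or_gt 0 x with hx0 | hx0
  · have : x ≤ x ^ 2 := by nlinarith [abs_of_nonneg hx0]
    linarith [exp_le_exp.2 this, exp_pos x]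
  · have : 1 < -x := by rwa [abs_of_neg hx0] at hx
    nlinarith [exp_le_one_iff.2 hx0.le]

lemma summable_mul_exp_neg_mul_rpow {c η : ℝ} (hc : 0 < c) (hη : 0 < η) :
    Summable fun n : ℕ => (n : ℝ) * exp (-(c * (n : ℝ) ^ η)) := by
  have hdecay : Tendsto (fun n : ℕ => ((n : ℝ) ^ η) ^ (3 / η) * exp (-c * (n : ℝ) ^ η))
      atTop (𝓝 0) :=
    (tendsto_rpow_mul_exp_neg_mul_atTop_nhds_zero _ c hc).comp
      ((tendsto_rpow_atTop hη).comp tendsto_natCast_atTop_atTop)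
  -- `(n ^ η) ^ (3 / η) = n ^ 3` and `n = n ^ 3 * n ^ (-2)`.
  refine summable_of_isBigO_nat (summable_nat_rpow.2 (by norm_num : (-2 : ℝ) < -1)) ?_
  refine (hdecay.isBigO_one ℝ).mul (Asymptotics.isBigO_refl (fun n : ℕ => (n : ℝ) ^ (-2 : ℝ)) _)
    |>.congr' ?_ (by simp)
  filter_upwards [eventually_gt_atTop 0] with n hn
  have hn' : (0 : ℝ) < n := by exact_mod_cast hn
  rw [← rpow_mul hn'.le, mul_div_cancel₀ _ hη.ne', neg_mul, mul_right_comm, ← rpow_add hn']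
  norm_num

lemma Real.rpow_one_sub_le_sum_rpow_neg {δ : ℝ} (hδ : 0 ≤ δ) {n : ℕ} (hn : 0 < n) :
    (n : ℝ) ^ (1 - δ) ≤ ∑ m ∈ Icc 1 n, (m : ℝ) ^ (-δ) := by
  have hn' : (0 : ℝ) < n := by exact_mod_cast hn
  calc (n : ℝ) ^ (1 - δ) = ∑ m ∈ Icc 1 n, (n : ℝ) ^ (-δ) := by
        rw [sum_const, Nat.card_Icc, nsmul_eq_mul, sub_eq_add_neg, rpow_add hn', rpow_one]
        simp
    _ ≤ ∑ m ∈ Icc 1 n, (m : ℝ) ^ (-δ) := sum_le_sum fun m hm => by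
        obtain ⟨h1, h2⟩ := mem_Icc.1 hm
        exact rpow_le_rpow_of_nonpos (by exact_mod_cast h1) (by exact_mod_cast h2) (by linarith)

section Conditional

variable {Ω : Type*} {m m0 : MeasurableSpace Ω} {P : Measure Ω} [IsFiniteMeasure P]

lemma ae_condExp_mem_Icc_zero_one {f : Ω → ℝ} (hf : ∀ ω, f ω ∈ Set.Icc (0 : ℝ) 1) :
    ∀ᵐ ω ∂P, P[f | m] ω ∈ Set.Icc (0 : ℝ) 1 := by
  by_cases hm : m ≤ m0
  swap
  · simp [condExp_of_not_le hm]
  by_cases hfi : Integrable f P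
  swap
  · simp [condExp_of_not_integrable hfi]
  have h0 : 0 ≤ᵐ[P] P[f | m] := condExp_nonneg (.of_forall fun ω => (hf ω).1)
  have h1 : P[f | m] ≤ᵐ[P] P[fun _ => (1 : ℝ) | m] :=
    condExp_mono hfi (integrable_const 1) (.of_forall fun ω => (hf ω).2)
  rw [condExp_const hm] at h1
  filter_upwards [h0, h1] with ω h0 h1 using ⟨h0, h1⟩

lemma integral_mul_exp_condExp_sub_le (hm : m ≤ m0) {W Y : Ω → ℝ}
    (hW : StronglyMeasurable[m] W) (hW0 : 0 ≤ W) (hWint : Integrable W P)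
    (hY : Measurable Y) (hY01 : ∀ ω, Y ω ∈ Set.Icc (0 : ℝ) 1) (l : ℝ) :
    Integrable (fun ω => W ω * exp (l * (P[Y | m] ω - Y ω))) P ∧
      ∫ ω, W ω * exp (l * (P[Y | m] ω - Y ω)) ∂P ≤ exp (l ^ 2) * ∫ ω, W ω ∂P := by
  set p := P[Y | m]
  have hp01 : ∀ᵐ ω ∂P, p ω ∈ Set.Icc (0 : ℝ) 1 := ae_condExp_mem_Icc_zero_one hY01
  have hpmeas : Measurable p := stronglyMeasurable_condExp.measurable.mono hm le_rfl
  have hWmeas : Measurable W := hW.measurable.mono hm le_rfl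
  have hWY : Integrable (fun ω => W ω * Y ω) P :=
    hWint.mono' (hWmeas.mul hY).aestronglyMeasurable (.of_forall fun ω => by
      simpa [abs_of_nonneg (hW0 ω), abs_of_nonneg (hY01 ω).1]
        using mul_le_mul_of_nonneg_left (hY01 ω).2 (hW0 ω))
  have hWp : Integrable (fun ω => W ω * p ω) P :=
    hWint.mono' (hWmeas.mul hpmeas).aestronglyMeasurable (by
      filter_upwards [hp01] with ω hp
      simpa [abs_of_nonneg (hW0 ω), abs_of_nonneg hp.1]
        using mul_le_mul_of_nonneg_left hp.2 (hW0 ω))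
  have hpull : ∫ ω, W ω * Y ω ∂P = ∫ ω, W ω * p ω ∂P := calc
    ∫ ω, W ω * Y ω ∂P = ∫ ω, P[W * Y | m] ω ∂P := (integral_condExp hm).symm
    _ = ∫ ω, W ω * p ω ∂P := integral_congr_ae
      (condExp_mul_of_stronglyMeasurable_left hW hWY (Integrable.of_bound hY.aestronglyMeasurable 1
        (.of_forall fun ω => by simpa [abs_of_nonneg (hY01 ω).1] using (hY01 ω).2)))
  set g : Ω → ℝ := fun ω => l * (W ω * p ω) - l * (W ω * Y ω) + exp (l ^ 2) * W ω
  have hg : Integrable g P := ((hWp.const_mul l).sub (hWY.const_mul l)).add (hWint.const_mul _)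
  -- `exp x ≤ x + exp (x ^ 2)` linearizes the exponential, and the linear term integrates to `0`
  -- against `W` by `hpull`.
  have hle : ∀ᵐ ω ∂P, W ω * exp (l * (p ω - Y ω)) ≤ g ω := by
    filter_upwards [hp01] with ω hp
    have hd : (p ω - Y ω) ^ 2 ≤ 1 := by
      rw [sq_le_one_iff_abs_le_one, abs_le]
      constructor <;> linarith [hp.1, hp.2, (hY01 ω).1, (hY01 ω).2]
    have hexp : exp (l * (p ω - Y ω)) ≤ l * (p ω - Y ω) + exp (l ^ 2) :=
      (exp_le_add_exp_sq _).trans (add_le_add_right (exp_le_exp.2 (by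
        rw [mul_pow]; exact mul_le_of_le_one_right (sq_nonneg l) hd)) _)
    calc W ω * exp (l * (p ω - Y ω)) ≤ W ω * (l * (p ω - Y ω) + exp (l ^ 2)) :=
          mul_le_mul_of_nonneg_left hexp (hW0 ω)
      _ = g ω := by ring
  have hint : Integrable (fun ω => W ω * exp (l * (p ω - Y ω))) P :=
    hg.mono' (by fun_prop) (by
      filter_upwards [hle] with ω hω
      rwa [Real.norm_of_nonneg (mul_nonneg (hW0 ω) (exp_pos _).le)])
  refine ⟨hint, (integral_mono_ae hint hg hle).trans_eq ?_⟩
  simp only [g]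
  rw [integral_add (f := fun ω => l * (W ω * p ω) - l * (W ω * Y ω))
      ((hWp.const_mul l).sub (hWY.const_mul l)) (hWint.const_mul _),
    integral_sub (hWp.const_mul l) (hWY.const_mul l), integral_const_mul, integral_const_mul,
    integral_const_mul, hpull, sub_self, zero_add]

end Conditional

section Compensator

variable {Ω : Type*} {m0 : MeasurableSpace Ω} {P : Measure Ω} {ℱ : Filtration ℕ m0} {X : ℕ → Ω → ℝ}

noncomputable def compensator (P : Measure Ω) (ℱ : Filtration ℕ m0) (X : ℕ → Ω → ℝ) (n : ℕ)
    (ω : Ω) : ℝ :=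
  ∑ m ∈ Icc 1 n, P[X m | ℱ (m - 1)] ω

lemma compensator_succ (n : ℕ) (ω : Ω) :
    compensator P ℱ X (n + 1) ω = compensator P ℱ X n ω + P[X (n + 1) | ℱ n] ω :=
  sum_Icc_succ_top (Nat.le_add_left 1 n) _

lemma measurable_compensator (n : ℕ) : Measurable[ℱ n] (compensator P ℱ X n) :=
  Finset.measurable_fun_sum _ fun m hm =>
    stronglyMeasurable_condExp.measurable.mono (ℱ.mono (by grind)) le_rfl

lemma ae_sum_le_compensator {a : ℕ → ℝ} (ha : ∀ m, 1 ≤ m → ∀ᵐ ω ∂P, a m ≤ P[X m | ℱ (m - 1)] ω)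
    (n : ℕ) : ∀ᵐ ω ∂P, ∑ m ∈ Icc 1 n, a m ≤ compensator P ℱ X n ω := by
  have h := (Finset.eventually_all (Icc 1 n)).2 fun m hm => ha m (mem_Icc.1 hm).1
  filter_upwards [h] with ω hω using sum_le_sum hω

variable [IsProbabilityMeasure P] (hX01 : ∀ n ω, X n ω ∈ Set.Icc (0 : ℝ) 1)
  (hXmeas : ∀ n, 1 ≤ n → Measurable[ℱ n] (X n))
include hX01 hXmeas

lemma integral_exp_mul_compensator_sub_sum_le (l : ℝ) (n : ℕ) :
    Integrable (fun ω => exp (l * (compensator P ℱ X n ω - ∑ m ∈ Icc 1 n, X m ω))) P ∧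
      ∫ ω, exp (l * (compensator P ℱ X n ω - ∑ m ∈ Icc 1 n, X m ω)) ∂P ≤ exp (n * l ^ 2) := by
  induction n with
  | zero => simp [compensator]
  | succ n ih =>
    have hsum : Measurable[ℱ n] fun ω => ∑ m ∈ Icc 1 n, X m ω :=
      Finset.measurable_fun_sum _ fun m hm =>
        (hXmeas m (mem_Icc.1 hm).1).mono (ℱ.mono (mem_Icc.1 hm).2) le_rfl
    have hW : StronglyMeasurable[ℱ n]
        fun ω => exp (l * (compensator P ℱ X n ω - ∑ m ∈ Icc 1 n, X m ω)) :=
      (((measurable_compensator n).sub hsum).const_mul l).exp.stronglyMeasurable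
    obtain ⟨hint, hle⟩ := integral_mul_exp_condExp_sub_le (ℱ.le n) hW (fun _ => (exp_pos _).le)
      ih.1 ((hXmeas (n + 1) (Nat.le_add_left 1 n)).mono (ℱ.le _) le_rfl) (hX01 (n + 1)) l
    have hsplit : ∀ ω, exp (l * (compensator P ℱ X (n + 1) ω - ∑ m ∈ Icc 1 (n + 1), X m ω)) =
        exp (l * (compensator P ℱ X n ω - ∑ m ∈ Icc 1 n, X m ω)) *
          exp (l * (P[X (n + 1) | ℱ n] ω - X (n + 1) ω)) := fun ω => by
      rw [compensator_succ, sum_Icc_succ_top (Nat.le_add_left 1 n), ← exp_add]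
      ring_nf
    simp only [hsplit]
    refine ⟨hint, hle.trans ?_⟩
    rw [Nat.cast_succ, add_mul, one_mul, exp_add, mul_comm]
    gcongr
    exact ih.2

-- Chernoff's bound with `l = t / (2 n)`; for `n = 0` the junk value `t ^ 2 / 0 = 0` makes it `1`.
lemma measure_le_compensator_sub_sum_le (n : ℕ) {t : ℝ} (ht : 0 ≤ t) :
    P {ω | t ≤ compensator P ℱ X n ω - ∑ m ∈ Icc 1 n, X m ω} ≤
      ENNReal.ofReal (exp (-(t ^ 2 / (4 * n)))) := by
  set l := t / (2 * n)
  set D := fun ω => compensator P ℱ X n ω - ∑ m ∈ Icc 1 n, X m ω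
  obtain ⟨hint, hmgf⟩ := integral_exp_mul_compensator_sub_sum_le hX01 hXmeas (P := P) l n
  have hl : 0 ≤ l := by positivity
  have hchernoff : P.real {ω | t ≤ D ω} ≤ exp (n * l ^ 2 - l * t) := by
    have hmarkov := mul_meas_ge_le_integral_of_nonneg
      (.of_forall fun ω => (exp_pos (l * D ω)).le) hint (exp (l * t))
    have hsub : P.real {ω | t ≤ D ω} ≤ P.real {ω | exp (l * t) ≤ exp (l * D ω)} :=
      measureReal_mono fun ω (hω : t ≤ D ω) => exp_le_exp.2 (mul_le_mul_of_nonneg_left hω hl)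
    rw [exp_sub, le_div_iff₀ (exp_pos _), mul_comm]
    exact (mul_le_mul_of_nonneg_left hsub (exp_pos _).le).trans (hmarkov.trans hmgf)
  have hexponent : n * l ^ 2 - l * t = -(t ^ 2 / (4 * n)) := by
    rcases eq_or_ne (n : ℝ) 0 with hn | hn
    · simp [l, hn]
    · simp only [l]
      field_simp
      ring
  rw [← ofReal_measureReal]
  exact ENNReal.ofReal_le_ofReal (hexponent ▸ hchernoff)

lemma measure_sum_lt_mul_rpow_le {δ Cp C : ℝ} (hδ : 0 ≤ δ) (hCp : 0 ≤ Cp) (hC : C ≤ Cp)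
    (hcond : ∀ n : ℕ, 1 ≤ n → ∀ᵐ ω ∂P, Cp * (n : ℝ) ^ (-δ) ≤ P[X n | ℱ (n - 1)] ω)
    {n : ℕ} (hn : 0 < n) :
    P {ω | ∑ m ∈ Icc 1 n, X m ω < C * (n : ℝ) ^ (1 - δ)} ≤
      ENNReal.ofReal (exp (-((Cp - C) ^ 2 / 4 * (n : ℝ) ^ (1 - 2 * δ)))) := by
  have hn' : (0 : ℝ) < n := by exact_mod_cast hn
  have hA : ∀ᵐ ω ∂P, Cp * (n : ℝ) ^ (1 - δ) ≤ compensator P ℱ X n ω := by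
    filter_upwards [ae_sum_le_compensator hcond n] with ω hω
    rw [← mul_sum] at hω
    exact (mul_le_mul_of_nonneg_left (rpow_one_sub_le_sum_rpow_neg hδ hn) hCp).trans hω
  have hevent : {ω | ∑ m ∈ Icc 1 n, X m ω < C * (n : ℝ) ^ (1 - δ)} ≤ᵐ[P]
      {ω | (Cp - C) * (n : ℝ) ^ (1 - δ) ≤ compensator P ℱ X n ω - ∑ m ∈ Icc 1 n, X m ω} := by
    filter_upwards [hA] with ω hω (hlt : _ < _)
    change _ ≤ _
    linarith
  have hexponent : ((Cp - C) * (n : ℝ) ^ (1 - δ)) ^ 2 / (4 * n) =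
      (Cp - C) ^ 2 / 4 * (n : ℝ) ^ (1 - 2 * δ) := by
    rw [show 1 - 2 * δ = (1 - δ) * 2 - 1 by ring, rpow_sub_one hn'.ne', rpow_mul hn'.le, rpow_two]
    ring
  rw [← hexponent]
  exact (measure_mono_ae hevent).trans (measure_le_compensator_sub_sum_le hX01 hXmeas n
    (mul_nonneg (sub_nonneg.2 hC) (rpow_nonneg hn'.le _)))

end Compensator

/-- core estimate of Proposition 6.3(ii): if `X_n ∈ {0,1}` is
`𝓕_n`-measurable with `E[X_n | 𝓕_{n−1}] ≥ C_p n^{−δ}` a.s. for every `n ≥ 1`, where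
`δ ∈ (0,1/2)` and `C_p > 0`, then for every `C ∈ (0, C_p)`,
`∑_n n · P(∑_{m=1}^n X_m < C n^{1−δ}) < ∞`. -/
theorem stmt_17 {Ω : Type*} {m0 : MeasurableSpace Ω} (P : Measure Ω) [IsProbabilityMeasure P]
    (ℱ : Filtration ℕ m0)
    (δ : ℝ) (hδ0 : 0 < δ) (hδ : δ < 1 / 2) (Cp : ℝ) (hCp : 0 < Cp)
    (X : ℕ → Ω → ℝ) (hX01 : ∀ n ω, X n ω = 0 ∨ X n ω = 1)
    (hXmeas : ∀ n, 1 ≤ n → Measurable[ℱ n] (X n))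
    (hcond : ∀ n : ℕ, 1 ≤ n → ∀ᵐ ω ∂P, Cp * (n : ℝ) ^ (-δ) ≤ (P[X n | ℱ (n - 1)]) ω) :
    ∀ C : ℝ, 0 < C → C < Cp →
      ∑' n : ℕ, (n : ENNReal) *
        P {ω | (∑ m ∈ Finset.Icc 1 n, X m ω) < C * (n : ℝ) ^ (1 - δ)} < ⊤ := by
  intro C _ hCCp
  have hXIcc : ∀ n ω, X n ω ∈ Set.Icc (0 : ℝ) 1 := fun n ω => by
    rcases hX01 n ω with h | h <;> simp [h]
  refine (ENNReal.tsum_le_tsum fun n => ?_).trans_lt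
    (summable_mul_exp_neg_mul_rpow (c := (Cp - C) ^ 2 / 4) (η := 1 - 2 * δ)
      (by have := sub_pos.2 hCCp; positivity) (by linarith)).tsum_ofReal_lt_top
  rcases Nat.eq_zero_or_pos n with rfl | hn
  · simp
  rw [ENNReal.ofReal_mul (Nat.cast_nonneg n), ENNReal.ofReal_natCast]
  exact mul_le_mul_right
    (measure_sum_lt_mul_rpow_le hXIcc hXmeas hδ0.le hCp.le hCCp.le hcond hn) _
end

section
/- Let (Ω, 𝓕, P) be a probability space with filtration (𝓕_n)_{n≥0}. Let (c_n)_{n≥1} ⊆ [0,1] be a deterministic sequence and c* ∈ [0,1] with liminf_{n→∞} c_n ≥ c*. Let (H_n)_{n≥1} be {0,1}-valued random variables with H_n 𝓕_n-measurable and E[H_n | 𝓕_{n−1}] = c_n almost surely for every n. Let σ be a random variable with values in {1,2,…} satisfying E[σ] < ∞, and let (R_n)_{n≥1} be {0,1}-valued random variables such that R_n(ω) = H_n(ω) whenever n ≥ σ(ω). Then for every ε > 0: ∑_{n=1}^{∞} P( ∑_{m=1}^{n} R_m < n·(c* − ε) ) < ∞. -/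
/-!
The centred sums `S n = ∑_{m ≤ n} (H m - c m)` have increments that are Bernoulli(`c m`) given the
past, so in the binomial expansion of `E[(S n + (H (n+1) - c (n+1))) ^ k]` every term factors into
a Bernoulli central moment times a moment of `S n`. Since the first central moment vanishes this
gives `E[S n] = 0`, `E[S n ^ 2] ≤ n` and `E[S n ^ 4] ≤ 3 n ^ 2`, and Markov's inequality for the
fourth power makes `∑ P(S n < -n ε / 4)` finite.

Pathwise, `R m = H m` for `m ≥ σ` and `c m > c* - ε / 2` for `m ≥ N`, so
`∑ R ≥ S n + n (c* - ε / 2) - (σ + N)`. Hence `{∑ R < n (c* - ε)}` is covered by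
`{S n < -n ε / 4}` and `{n ε / 4 < σ + N}`, and the probabilities of the latter are summable
because `σ` is integrable.
-/

open MeasureTheory Filter Finset

def bernoulliCentralMoment (c : ℝ) (j : ℕ) : ℝ := c * (1 - c) ^ j + (1 - c) * (-c) ^ j

@[simp]
theorem bernoulliCentralMoment_zero (c : ℝ) : bernoulliCentralMoment c 0 = 1 := by
  simp [bernoulliCentralMoment]

@[simp]
theorem bernoulliCentralMoment_one (c : ℝ) : bernoulliCentralMoment c 1 = 0 := by
  simp only [bernoulliCentralMoment]; ring

theorem bernoulliCentralMoment_le_one {c : ℝ} (hc0 : 0 ≤ c) (hc1 : c ≤ 1) (j : ℕ) :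
    bernoulliCentralMoment c j ≤ 1 := by
  have h₁ : (1 - c) ^ j ≤ 1 := pow_le_one₀ (by linarith) (by linarith)
  have h₂ : (-c) ^ j ≤ 1 := by
    calc (-c) ^ j ≤ |(-c) ^ j| := le_abs_self _
      _ = c ^ j := by rw [abs_pow, abs_neg, abs_of_nonneg hc0]
      _ ≤ 1 := pow_le_one₀ hc0 hc1
  unfold bernoulliCentralMoment
  nlinarith [mul_le_mul_of_nonneg_left h₁ hc0, mul_le_mul_of_nonneg_left h₂ (sub_nonneg.2 hc1)]

theorem integrable_pow_of_abs_le {Ω : Type*} {m0 : MeasurableSpace Ω} {P : Measure Ω}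
    [IsFiniteMeasure P] {S : Ω → ℝ} (hS : AEStronglyMeasurable S P) {B : ℝ}
    (hSB : ∀ ω, |S ω| ≤ B) (j : ℕ) : Integrable (fun ω => S ω ^ j) P :=
  .of_bound (hS.pow j) (B ^ j) (.of_forall fun ω => by
    rw [norm_pow, Real.norm_eq_abs]
    exact pow_le_pow_left₀ (abs_nonneg _) (hSB ω) j)

section CondExpConst

variable {Ω : Type*} {m m0 : MeasurableSpace Ω} {P : Measure Ω} [IsFiniteMeasure P]
  {H X : Ω → ℝ} {c : ℝ}

theorem integral_mul_of_condExp_eq_const (hm : m ≤ m0) (hX : StronglyMeasurable[m] X)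
    (hXH : Integrable (X * H) P) (hH : Integrable H P) (hHc : P[H | m] =ᵐ[P] fun _ => c) :
    ∫ ω, X ω * H ω ∂P = c * ∫ ω, X ω ∂P := by
  calc ∫ ω, X ω * H ω ∂P = ∫ ω, (P[X * H | m]) ω ∂P := (integral_condExp hm).symm
    _ = ∫ ω, X ω * c ∂P := by
      refine integral_congr_ae ?_
      filter_upwards [condExp_mul_of_stronglyMeasurable_left hX hXH hH, hHc] with ω h hc
      rw [h, Pi.mul_apply, hc]
    _ = c * ∫ ω, X ω ∂P := by rw [integral_mul_const, mul_comm]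

theorem integral_mul_sub_pow_of_condExp_eq_const (hm : m ≤ m0) (hH : Measurable H)
    (hH01 : ∀ ω, H ω = 0 ∨ H ω = 1) (hHc : P[H | m] =ᵐ[P] fun _ => c)
    (hX : StronglyMeasurable[m] X) (hXi : Integrable X P) (j : ℕ) :
    ∫ ω, X ω * (H ω - c) ^ j ∂P = bernoulliCentralMoment c j * ∫ ω, X ω ∂P := by
  have hHb : ∀ ω, ‖H ω‖ ≤ 1 := fun ω => by rcases hH01 ω with h | h <;> simp [h]
  have hHi : Integrable H P := .of_bound hH.aestronglyMeasurable 1 (.of_forall hHb)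
  have hXH : Integrable (fun ω => X ω * H ω) P :=
    hXi.mul_bdd hH.aestronglyMeasurable (.of_forall hHb)
  -- `(H - c) ^ j` is affine in the two-valued variable `H`
  have haffine : ∀ ω, X ω * (H ω - c) ^ j
      = (-c) ^ j * X ω + ((1 - c) ^ j - (-c) ^ j) * (X ω * H ω) := fun ω => by
    rcases hH01 ω with h | h <;> simp [h] <;> ring
  simp_rw [haffine]
  rw [integral_add (hXi.const_mul _) (hXH.const_mul _), integral_const_mul, integral_const_mul,
    integral_mul_of_condExp_eq_const hm hX hXH hHi hHc, bernoulliCentralMoment]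
  ring

theorem integral_add_sub_pow_of_condExp_eq_const (hm : m ≤ m0) (hH : Measurable H)
    (hH01 : ∀ ω, H ω = 0 ∨ H ω = 1) (hHc : P[H | m] =ᵐ[P] fun _ => c)
    {S : Ω → ℝ} (hS : StronglyMeasurable[m] S) {B : ℝ} (hSB : ∀ ω, |S ω| ≤ B) (k : ℕ) :
    ∫ ω, (S ω + (H ω - c)) ^ k ∂P
      = ∑ j ∈ range (k + 1), (k.choose j : ℝ) * bernoulliCentralMoment c (k - j) *
          ∫ ω, S ω ^ j ∂P := by
  have hSi := integrable_pow_of_abs_le (hS.mono hm).aestronglyMeasurable hSB (P := P)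
  have hdb : ∀ ω, ‖H ω - c‖ ≤ 1 + |c| := fun ω => by
    have : ‖H ω‖ ≤ 1 := by rcases hH01 ω with h | h <;> simp [h]
    linarith [norm_sub_le (H ω) c, Real.norm_eq_abs c]
  have hdi : ∀ j : ℕ, Integrable (fun ω => S ω ^ j * (H ω - c) ^ (k - j)) P := fun j =>
    (hSi j).mul_bdd ((hH.sub_const c).pow_const _).aestronglyMeasurable
      (.of_forall fun ω => by rw [norm_pow]; exact pow_le_pow_left₀ (norm_nonneg _) (hdb ω) _)
  simp_rw [add_pow]
  rw [integral_finsetSum _ fun j _ => (hdi j).mul_const _]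
  refine sum_congr rfl fun j _ => ?_
  rw [integral_mul_const, integral_mul_sub_pow_of_condExp_eq_const (X := fun ω => S ω ^ j) hm hH
    hH01 hHc (hS.pow j) (hSi j)]
  ring

end CondExpConst

theorem sum_Icc_le_of_le_one_of_nonpos {u : ℕ → ℝ} {s : ℕ} (h1 : ∀ m, u m ≤ 1)
    (h0 : ∀ m, s ≤ m → u m ≤ 0) (n : ℕ) : ∑ m ∈ Icc 1 n, u m ≤ s := by
  calc ∑ m ∈ Icc 1 n, u m ≤ ∑ m ∈ Icc 1 n, if m < s then (1 : ℝ) else 0 :=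
        sum_le_sum fun m _ => by
          split_ifs with hm
          · exact h1 m
          · exact h0 m (not_lt.1 hm)
    _ = #{m ∈ Icc 1 n | m < s} := by rw [sum_boole]
    _ ≤ #(range s) := by
        gcongr
        intro m hm
        simp only [mem_filter] at hm
        exact mem_range.2 hm.2
    _ = s := by rw [card_range]

theorem measure_lt_neg_le_integral_pow_four_div {Ω : Type*} {m0 : MeasurableSpace Ω}
    {P : Measure Ω} [IsFiniteMeasure P] {f : Ω → ℝ} (hf : Integrable (fun ω => f ω ^ 4) P)
    {a : ℝ} (ha : 0 < a) :
    P {ω | f ω < -a} ≤ ENNReal.ofReal ((∫ ω, f ω ^ 4 ∂P) / a ^ 4) := by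
  have hsub : {ω | f ω < -a} ⊆ {ω | a ^ 4 ≤ f ω ^ 4} := fun ω (h : f ω < -a) => by
    show a ^ 4 ≤ f ω ^ 4
    nlinarith [pow_le_pow_left₀ ha.le (show a ≤ -f ω by linarith) 4]
  have hmarkov :=
    mul_meas_ge_le_integral_of_nonneg (.of_forall fun ω => by positivity) hf (a ^ 4)
  calc P {ω | f ω < -a} ≤ P {ω | a ^ 4 ≤ f ω ^ 4} := measure_mono hsub
    _ = ENNReal.ofReal (P.real {ω | a ^ 4 ≤ f ω ^ 4}) :=
        (ofReal_measureReal (measure_ne_top P _)).symm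
    _ ≤ ENNReal.ofReal ((∫ ω, f ω ^ 4 ∂P) / a ^ 4) := by
        gcongr
        rw [le_div_iff₀ (by positivity)]
        linarith

theorem tsum_measure_nat_mul_lt_lt_top {Ω : Type*} {m0 : MeasurableSpace Ω} {P : Measure Ω}
    [IsProbabilityMeasure P] {Y : Ω → ℝ} (hY : Integrable Y P) (hY0 : 0 ≤ Y) {δ : ℝ}
    (hδ : 0 < δ) : ∑' n : ℕ, P {ω | n * δ < Y ω} < ⊤ := by
  -- `tsum_prob_mem_Ioi_lt_top` is stated for the ambient probability measure `ℙ = volume`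
  let : MeasureSpace Ω := ⟨P⟩
  have := ProbabilityTheory.tsum_prob_mem_Ioi_lt_top (hY.div_const δ)
    (fun ω => div_nonneg (hY0 ω) hδ.le)
  refine (tsum_congr fun n => ?_).trans_lt this
  show P _ = P _
  congr 1
  ext ω
  exact (lt_div_iff₀ hδ).symm

def centeredPartialSum {Ω : Type*} (H : ℕ → Ω → ℝ) (c : ℕ → ℝ) (n : ℕ) (ω : Ω) : ℝ :=
  ∑ m ∈ Icc 1 n, (H m ω - c m)

section CenteredPartialSum

variable {Ω : Type*} {m0 : MeasurableSpace Ω} {P : Measure Ω} [IsProbabilityMeasure P]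
  {ℱ : Filtration ℕ m0} {c : ℕ → ℝ} {H : ℕ → Ω → ℝ}

theorem centeredPartialSum_succ (n : ℕ) (ω : Ω) :
    centeredPartialSum H c (n + 1) ω =
      centeredPartialSum H c n ω + (H (n + 1) ω - c (n + 1)) :=
  sum_Icc_succ_top (by omega) _

theorem stronglyMeasurable_centeredPartialSum (hHmeas : ∀ n, 1 ≤ n → Measurable[ℱ n] (H n))
    (n : ℕ) : StronglyMeasurable[ℱ n] (centeredPartialSum H c n) :=
  (Finset.measurable_fun_sum _ fun m hm =>
    ((hHmeas m (mem_Icc.1 hm).1).mono (ℱ.mono (mem_Icc.1 hm).2) le_rfl).sub_const _)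
    |>.stronglyMeasurable

theorem abs_centeredPartialSum_le (hc01 : ∀ n, 0 ≤ c n ∧ c n ≤ 1)
    (hH01 : ∀ n ω, H n ω = 0 ∨ H n ω = 1) (n : ℕ) (ω : Ω) :
    |centeredPartialSum H c n ω| ≤ n := by
  calc |centeredPartialSum H c n ω| ≤ ∑ m ∈ Icc 1 n, |H m ω - c m| := abs_sum_le_sum_abs _ _
    _ ≤ ∑ m ∈ Icc 1 n, (1 : ℝ) := sum_le_sum fun m _ => by
        rw [abs_le]
        rcases hH01 m ω with h | h <;> rw [h] <;> constructor <;> linarith [hc01 m]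
    _ = n := by simp

theorem centeredPartialSum_moments (hc01 : ∀ n, 0 ≤ c n ∧ c n ≤ 1)
    (hH01 : ∀ n ω, H n ω = 0 ∨ H n ω = 1) (hHmeas : ∀ n, 1 ≤ n → Measurable[ℱ n] (H n))
    (hHcond : ∀ n : ℕ, 1 ≤ n → P[H n | ℱ (n - 1)] =ᵐ[P] fun _ => c n) (n : ℕ) :
    ∫ ω, centeredPartialSum H c n ω ∂P = 0 ∧
      ∫ ω, centeredPartialSum H c n ω ^ 2 ∂P ≤ n ∧
      ∫ ω, centeredPartialSum H c n ω ^ 4 ∂P ≤ 3 * n ^ 2 := by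
  induction n with
  | zero => simp [centeredPartialSum]
  | succ n ih =>
    obtain ⟨ih₁, ih₂, ih₄⟩ := ih
    have hexp := integral_add_sub_pow_of_condExp_eq_const (P := P) (ℱ.le n)
      ((hHmeas (n + 1) (by omega)).mono (ℱ.le _) le_rfl) (hH01 (n + 1))
      (by simpa using hHcond (n + 1) (by omega))
      (stronglyMeasurable_centeredPartialSum hHmeas n) (abs_centeredPartialSum_le hc01 hH01 n)
    have hκ₂ := bernoulliCentralMoment_le_one (hc01 (n + 1)).1 (hc01 (n + 1)).2 2
    have hκ₄ := bernoulliCentralMoment_le_one (hc01 (n + 1)).1 (hc01 (n + 1)).2 4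
    have hS₂ : 0 ≤ ∫ ω, centeredPartialSum H c n ω ^ 2 ∂P :=
      integral_nonneg fun ω => sq_nonneg _
    have h₁ := hexp 1
    have h₂ := hexp 2
    have h₄ := hexp 4
    simp only [sum_range_succ, sum_range_zero, pow_one] at h₁ h₂ h₄
    simp [ih₁, Nat.choose_two_right] at h₁ h₂ h₄
    simp only [centeredPartialSum_succ]
    refine ⟨h₁, ?_, ?_⟩
    · rw [h₂]; push_cast; linarith
    · rw [h₄]; push_cast; nlinarith

theorem tsum_measure_centeredPartialSum_lt_lt_top (hc01 : ∀ n, 0 ≤ c n ∧ c n ≤ 1)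
    (hH01 : ∀ n ω, H n ω = 0 ∨ H n ω = 1) (hHmeas : ∀ n, 1 ≤ n → Measurable[ℱ n] (H n))
    (hHcond : ∀ n : ℕ, 1 ≤ n → P[H n | ℱ (n - 1)] =ᵐ[P] fun _ => c n) {δ : ℝ}
    (hδ : 0 < δ) :
    ∑' n : ℕ, P {ω | centeredPartialSum H c n ω < -(n * δ)} < ⊤ := by
  have hbound : ∀ n : ℕ, P {ω | centeredPartialSum H c n ω < -(n * δ)}
      ≤ ENNReal.ofReal (3 / δ ^ 4 * (1 / (n : ℝ) ^ 2)) := by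
    intro n
    rcases Nat.eq_zero_or_pos n with rfl | hn
    · simp [centeredPartialSum]
    have hS4 := integrable_pow_of_abs_le (P := P)
      ((stronglyMeasurable_centeredPartialSum hHmeas n).mono (ℱ.le n)).aestronglyMeasurable
      (abs_centeredPartialSum_le hc01 hH01 n) 4
    calc P {ω | centeredPartialSum H c n ω < -(n * δ)}
        ≤ ENNReal.ofReal ((∫ ω, centeredPartialSum H c n ω ^ 4 ∂P) / (n * δ) ^ 4) :=
          measure_lt_neg_le_integral_pow_four_div hS4 (by positivity)
      _ ≤ ENNReal.ofReal (3 / δ ^ 4 * (1 / (n : ℝ) ^ 2)) := by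
          gcongr
          calc (∫ ω, centeredPartialSum H c n ω ^ 4 ∂P) / (n * δ) ^ 4
              ≤ 3 * n ^ 2 / (n * δ) ^ 4 := by
                gcongr
                exact (centeredPartialSum_moments hc01 hH01 hHmeas hHcond n).2.2
            _ = 3 / δ ^ 4 * (1 / (n : ℝ) ^ 2) := by field_simp
  have hsummable : Summable fun n : ℕ => 3 / δ ^ 4 * (1 / (n : ℝ) ^ 2) :=
    (Real.summable_one_div_nat_pow.2 one_lt_two).mul_left _
  calc ∑' n : ℕ, P {ω | centeredPartialSum H c n ω < -(n * δ)}
      ≤ ∑' n : ℕ, ENNReal.ofReal (3 / δ ^ 4 * (1 / (n : ℝ) ^ 2)) :=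
        ENNReal.tsum_le_tsum hbound
    _ = ENNReal.ofReal (∑' n : ℕ, 3 / δ ^ 4 * (1 / (n : ℝ) ^ 2)) :=
        (ENNReal.ofReal_tsum_of_nonneg (fun n => by positivity) hsummable).symm
    _ < ⊤ := ENNReal.ofReal_lt_top

end CenteredPartialSum

theorem le_sum_Icc_of_eventually_eq {R H c : ℕ → ℝ} {a : ℝ} {s N : ℕ}
    (hHR : ∀ m, H m - R m ≤ 1) (hRH : ∀ m, s ≤ m → R m = H m) (hca : ∀ m, a - c m ≤ 1)
    (hN : ∀ m, N ≤ m → a ≤ c m) (n : ℕ) :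
    ∑ m ∈ Icc 1 n, (H m - c m) + n * a - (s + N) ≤ ∑ m ∈ Icc 1 n, R m := by
  have hR := sum_Icc_le_of_le_one_of_nonpos hHR (fun m hm => by rw [hRH m hm, sub_self]) n
  have hc := sum_Icc_le_of_le_one_of_nonpos hca (fun m hm => sub_nonpos.2 (hN m hm)) n
  simp only [sum_sub_distrib, sum_const, Nat.card_Icc, add_tsub_cancel_right, nsmul_eq_mul]
    at hR hc ⊢
  linarith

theorem stmt_18_general {Ω : Type*} {m0 : MeasurableSpace Ω} (P : Measure Ω) [IsProbabilityMeasure P]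
    (ℱ : Filtration ℕ m0)
    (c : ℕ → ℝ) (hc01 : ∀ n, 0 ≤ c n ∧ c n ≤ 1)
    (cstar : ℝ)
    (hliminf : cstar ≤ Filter.liminf c Filter.atTop)
    (H : ℕ → Ω → ℝ) (hH01 : ∀ n ω, H n ω = 0 ∨ H n ω = 1)
    (hHmeas : ∀ n, 1 ≤ n → Measurable[ℱ n] (H n))
    (hHcond : ∀ n : ℕ, 1 ≤ n → P[H n | ℱ (n - 1)] =ᵐ[P] fun _ => c n)
    (σ : Ω → ℕ)
    (hσint : Integrable (fun ω => (σ ω : ℝ)) P)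
    (R : ℕ → Ω → ℝ) (hR01 : ∀ n ω, R n ω = 0 ∨ R n ω = 1)
    (hRH : ∀ n ω, σ ω ≤ n → R n ω = H n ω) :
    ∀ ε : ℝ, 0 < ε →
      ∑' n : ℕ, P {ω | (∑ m ∈ Finset.Icc 1 n, R m ω) < (n : ℝ) * (cstar - ε)} < ⊤ := by
  intro ε hε
  obtain ⟨N, hN⟩ : ∃ N, ∀ m ≥ N, cstar - ε / 2 < c m :=
    eventually_atTop.1 <| eventually_lt_of_lt_liminf (by linarith)
      (isBoundedUnder_of ⟨0, fun n => (hc01 n).1⟩)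
  have hcover : ∀ n : ℕ, {ω | ∑ m ∈ Icc 1 n, R m ω < n * (cstar - ε)} ⊆
      {ω | centeredPartialSum H c n ω < -(n * (ε / 4))} ∪ {ω | n * (ε / 4) < σ ω + N} := by
    intro n ω (hω : ∑ m ∈ Icc 1 n, R m ω < n * (cstar - ε))
    by_contra! hcon
    simp only [Set.mem_union, Set.mem_ofPred_eq, not_or, not_lt] at hcon
    have hlow := le_sum_Icc_of_eventually_eq (R := (R · ω)) (H := (H · ω))
      (a := cstar - ε / 2)
      (fun m => by rcases hH01 m ω with h | h <;> rcases hR01 m ω with h' | h' <;> simp [h, h'])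
      (hRH · ω)
      (fun m => by linarith [hN N le_rfl, hc01 N, hc01 m]) (fun m hm => (hN m hm).le) n
    unfold centeredPartialSum at hcon
    linarith
  have hσN : Integrable (fun ω => (σ ω : ℝ) + N) P := hσint.add (integrable_const _)
  calc ∑' n : ℕ, P {ω | ∑ m ∈ Icc 1 n, R m ω < n * (cstar - ε)}
      ≤ ∑' n : ℕ, (P {ω | centeredPartialSum H c n ω < -(n * (ε / 4))}
          + P {ω | n * (ε / 4) < σ ω + N}) :=
        ENNReal.tsum_le_tsum fun n => (measure_mono (hcover n)).trans (measure_union_le _ _)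
    _ = _ := ENNReal.tsum_add
    _ < ⊤ := ENNReal.add_lt_top.2
      ⟨tsum_measure_centeredPartialSum_lt_lt_top hc01 hH01 hHmeas hHcond (by positivity),
        tsum_measure_nat_mul_lt_lt_top hσN (fun ω => by positivity) (by positivity)⟩

/-- abstract form of Theorem 6.2(i): let `(c_n) ⊆ [0,1]` with
`liminf c_n ≥ c* ∈ [0,1]`; let `H_n ∈ {0,1}` be `𝓕_n`-measurable with
`E[H_n | 𝓕_{n−1}] = c_n` a.s.; let `σ ≥ 1` be an integrable random time and suppose
`R_n(ω) = H_n(ω)` for all `n ≥ σ(ω)` with `R_n ∈ {0,1}`. Then for every `ε > 0`,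
`∑_n P(∑_{m=1}^n R_m < n (c* − ε)) < ∞`. -/
theorem stmt_18 {Ω : Type*} {m0 : MeasurableSpace Ω} (P : Measure Ω) [IsProbabilityMeasure P]
    (ℱ : Filtration ℕ m0)
    (c : ℕ → ℝ) (hc01 : ∀ n, 0 ≤ c n ∧ c n ≤ 1)
    (cstar : ℝ) (hcstar0 : 0 ≤ cstar) (hcstar1 : cstar ≤ 1)
    (hliminf : cstar ≤ Filter.liminf c Filter.atTop)
    (H : ℕ → Ω → ℝ) (hH01 : ∀ n ω, H n ω = 0 ∨ H n ω = 1)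
    (hHmeas : ∀ n, 1 ≤ n → Measurable[ℱ n] (H n))
    (hHcond : ∀ n : ℕ, 1 ≤ n → P[H n | ℱ (n - 1)] =ᵐ[P] fun _ => c n)
    (σ : Ω → ℕ) (hσ1 : ∀ ω, 1 ≤ σ ω) (hσmeas : Measurable σ)
    (hσint : Integrable (fun ω => (σ ω : ℝ)) P)
    (R : ℕ → Ω → ℝ) (hR01 : ∀ n ω, R n ω = 0 ∨ R n ω = 1)
    (hRH : ∀ n ω, σ ω ≤ n → R n ω = H n ω) :
    ∀ ε : ℝ, 0 < ε →
      ∑' n : ℕ, P {ω | (∑ m ∈ Finset.Icc 1 n, R m ω) < (n : ℝ) * (cstar - ε)} < ⊤ :=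
  stmt_18_general P ℱ c hc01 cstar hliminf H hH01 hHmeas hHcond σ hσint R hR01 hRH
end
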